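/- arXiv:2205.09019 — 5 statements merged into one kernel-verified Lean document; each statement's English description precedes it below -/
import Mathlib

section
/- Let R be a commutative ring that is a ℂ-algebra, A an R-module with an R-bilinear map β : A → A → A, M and N associative (possibly non-unital) R-algebras, t_i : A → M an R-linear map, h : M → N a (non-unital) R-algebra homomorphism, and ħ ∈ ℂ. Assume the exact quantization relation ⁅t_i f, t_i g⁆ = (i·ħ) • t_i (β f g) for all f, g ∈ A, that there exist f₀, g₀ ∈ A with ⁅t_i f₀, t_i g₀⁆ ≠ 0, and that the images of t_j := h ∘ t_i pairwise commute, i.e. ⁅t_j f, t_j g⁆ = 0 for all f, g ∈ A. Then: (a) t_j (β f g) = 0 for all f, g ∈ A; (b) there exist f, g ∈ A with t_i (β f g) ≠ 0; and (c) t_i (β f g) lies in the kernel of h for all f, g ∈ A. -/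
/-- Corollary 2.5: if the pushed-forward quantization map has commuting images,
then the image of the Poisson bracket vanishes, and the images of brackets
under the original quantization map lie in the kernel of the homomorphism. -/
theorem stmt1
    {R : Type*} [CommRing R] [Algebra ℂ R]
    {A : Type*} [AddCommGroup A] [Module R A]
    {M : Type*} [NonUnitalRing M] [Module R M]
    [SMulCommClass R M M] [IsScalarTower R M M]
    [Module ℂ M] [IsScalarTower ℂ R M]
    {N : Type*} [NonUnitalRing N] [Module R N]
    [SMulCommClass R N N] [IsScalarTower R N N]
    [Module ℂ N] [IsScalarTower ℂ R N]
    (β : A →ₗ[R] A →ₗ[R] A) (ti : A →ₗ[R] M) (h : M →ₙₐ[R] N) (hbar : ℂ)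
    (tj : A → N) (htj : tj = fun a => h (ti a))
    (hq : ∀ f g : A, ti f * ti g - ti g * ti f = (Complex.I * hbar) • ti (β f g))
    (hnc : ∃ f₀ g₀ : A, ti f₀ * ti g₀ - ti g₀ * ti f₀ ≠ 0)
    (hcomm : ∀ f g : A, tj f * tj g - tj g * tj f = 0) :
    (∀ f g : A, tj (β f g) = 0) ∧
    (∃ f g : A, ti (β f g) ≠ 0) ∧
    (∀ f g : A, h (ti (β f g)) = 0) := by
  obtain ⟨f₀, g₀, hfg⟩ := hnc
  have hbar0 : hbar ≠ 0 := by
    intro h0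
    apply hfg
    rw [hq, h0, mul_zero, zero_smul]
  have hc : (Complex.I * hbar) ≠ 0 := mul_ne_zero Complex.I_ne_zero hbar0
  have hsmul : ∀ (c : ℂ) (m : M), h (c • m) = c • h m := by
    intro c m
    rw [← smul_one_smul R c m, map_smul, smul_one_smul]
  have key : ∀ f g : A, (Complex.I * hbar) • h (ti (β f g)) = 0 := by
    intro f g
    have := hcomm f g
    rw [htj] at this
    simp only at this
    rw [← map_mul h, ← map_mul h, ← map_sub h, hq, hsmul] at this
    exact this
  have hker : ∀ f g : A, h (ti (β f g)) = 0 := by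
    intro f g
    have := congrArg (fun x => (Complex.I * hbar)⁻¹ • x) (key f g)
    simpa [smul_smul, inv_mul_cancel₀ hc, hbar0] using this
  refine ⟨fun f g => by rw [htj]; exact hker f g, ⟨f₀, g₀, ?_⟩, hker⟩
  intro h0
  apply hfg
  rw [hq, h0, smul_zero]
end

section
/- Let d be a natural number and let c : Fin d → Fin d → Fin d → ℂ be structure constants satisfying antisymmetry c i j k = − c j i k for all i, j, k, and the Jacobi identity of structure constants: for all i, j, l, m, Σ_k (c i j k * c k l m + c j l k * c k i m + c l i k * c k j m) = 0. Define on the polynomial ring ℂ[x¹,…,x^d] = MvPolynomial (Fin d) ℂ the bracket {f, g} := Σ_{i,j,k} c i j k • (X k * (pderiv i f) * (pderiv j g)). Then this bracket is ℂ-bilinear, antisymmetric ({f,g} = −{g,f}), satisfies the Leibniz rule {f, g*h} = {f,g}*h + g*{f,h}, and satisfies the Jacobi identity {{f₁,f₂},f₃} + {{f₂,f₃},f₁} + {{f₃,f₁},f₂} = 0 for all polynomials f₁, f₂, f₃; that is, (ℂ[x], ·, { , }) is a Poisson algebra. -/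
open MvPolynomial Finset

private lemma pd_comm {d : ℕ} (i j : Fin d) (p : MvPolynomial (Fin d) ℂ) :
    pderiv i (pderiv j p) = pderiv j (pderiv i p) := by
  induction p using MvPolynomial.induction_on' with
  | add p q hp hq => simp [hp, hq]
  | monomial s a =>
    rcases eq_or_ne i j with rfl | hij
    · rfl
    · simp only [pderiv_monomial]
      rw [tsub_tsub, tsub_tsub, add_comm]
      congr 1
      rw [Finsupp.tsub_apply, Finsupp.tsub_apply,
        Finsupp.single_apply, Finsupp.single_apply]
      simp [hij, hij.symm]
      ring

private lemma curry3 {M : Type*} [AddCommMonoid M] {d : ℕ}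
    (F : Fin d → Fin d → Fin d → M) :
    (∑ p : Fin d × Fin d × Fin d, F p.1 p.2.1 p.2.2)
      = ∑ i, ∑ j, ∑ k, F i j k := by
  simp only [Fintype.sum_prod_type]

private lemma sum3_eq {M : Type*} [AddCommMonoid M] {d : ℕ}
    (e : (Fin d × Fin d × Fin d) ≃ (Fin d × Fin d × Fin d))
    (F G : Fin d → Fin d → Fin d → M)
    (h : ∀ p : Fin d × Fin d × Fin d,
      F p.1 p.2.1 p.2.2 = G (e p).1 (e p).2.1 (e p).2.2) :
    (∑ i, ∑ j, ∑ k, F i j k) = ∑ i, ∑ j, ∑ k, G i j k := by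
  rw [← curry3 F, ← curry3 G]
  exact Fintype.sum_equiv e _ _ fun p => h p

private lemma curry5 {M : Type*} [AddCommMonoid M] {d : ℕ}
    (F : Fin d → Fin d → Fin d → Fin d → Fin d → M) :
    (∑ p : Fin d × Fin d × Fin d × Fin d × Fin d,
        F p.1 p.2.1 p.2.2.1 p.2.2.2.1 p.2.2.2.2)
      = ∑ i, ∑ j, ∑ k, ∑ a, ∑ b, F i j k a b := by
  simp only [Fintype.sum_prod_type]

private lemma sum5_eq {M : Type*} [AddCommMonoid M] {d : ℕ}
    (e : (Fin d × Fin d × Fin d × Fin d × Fin d) ≃ (Fin d × Fin d × Fin d × Fin d × Fin d))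
    (F G : Fin d → Fin d → Fin d → Fin d → Fin d → M)
    (h : ∀ p : Fin d × Fin d × Fin d × Fin d × Fin d,
      F p.1 p.2.1 p.2.2.1 p.2.2.2.1 p.2.2.2.2
        = G (e p).1 (e p).2.1 (e p).2.2.1 (e p).2.2.2.1 (e p).2.2.2.2) :
    (∑ i, ∑ j, ∑ k, ∑ a, ∑ b, F i j k a b) = ∑ i, ∑ j, ∑ k, ∑ a, ∑ b, G i j k a b := by
  rw [← curry5 F, ← curry5 G]
  exact Fintype.sum_equiv e _ _ fun p => h p

private lemma curry6 {M : Type*} [AddCommMonoid M] {d : ℕ}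
    (F : Fin d → Fin d → Fin d → Fin d → Fin d → Fin d → M) :
    (∑ p : Fin d × Fin d × Fin d × Fin d × Fin d × Fin d,
        F p.1 p.2.1 p.2.2.1 p.2.2.2.1 p.2.2.2.2.1 p.2.2.2.2.2)
      = ∑ i, ∑ j, ∑ k, ∑ a, ∑ b, ∑ m, F i j k a b m := by
  simp only [Fintype.sum_prod_type]

private lemma sum6_eq {M : Type*} [AddCommMonoid M] {d : ℕ}
    (e : (Fin d × Fin d × Fin d × Fin d × Fin d × Fin d)
        ≃ (Fin d × Fin d × Fin d × Fin d × Fin d × Fin d))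
    (F G : Fin d → Fin d → Fin d → Fin d → Fin d → Fin d → M)
    (h : ∀ p : Fin d × Fin d × Fin d × Fin d × Fin d × Fin d,
      F p.1 p.2.1 p.2.2.1 p.2.2.2.1 p.2.2.2.2.1 p.2.2.2.2.2
        = G (e p).1 (e p).2.1 (e p).2.2.1 (e p).2.2.2.1 (e p).2.2.2.2.1 (e p).2.2.2.2.2) :
    (∑ i, ∑ j, ∑ k, ∑ a, ∑ b, ∑ m, F i j k a b m)
      = ∑ i, ∑ j, ∑ k, ∑ a, ∑ b, ∑ m, G i j k a b m := by
  rw [← curry6 F, ← curry6 G]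
  exact Fintype.sum_equiv e _ _ fun p => h p

private lemma pderiv_br {d : ℕ} (c : Fin d → Fin d → Fin d → ℂ)
    (f g : MvPolynomial (Fin d) ℂ) (a : Fin d) :
    pderiv a (∑ i, ∑ j, ∑ k, c i j k • (X k * pderiv i f * pderiv j g)) =
      (∑ i, ∑ j, c i j a • (pderiv i f * pderiv j g))
      + (∑ i, ∑ j, ∑ k, c i j k • (X k * (pderiv a (pderiv i f) * pderiv j g)))
      + (∑ i, ∑ j, ∑ k, c i j k • (X k * (pderiv i f * pderiv a (pderiv j g)))) := by
  rw [map_sum]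
  rw [← Finset.sum_add_distrib, ← Finset.sum_add_distrib]
  refine Finset.sum_congr rfl fun i _ => ?_
  rw [map_sum, ← Finset.sum_add_distrib, ← Finset.sum_add_distrib]
  refine Finset.sum_congr rfl fun j _ => ?_
  rw [map_sum]
  have : ∀ k, pderiv a (c i j k • (X k * pderiv i f * pderiv j g))
      = (if k = a then c i j k • (pderiv i f * pderiv j g) else 0)
        + (c i j k • (X k * (pderiv a (pderiv i f) * pderiv j g))
          + c i j k • (X k * (pderiv i f * pderiv a (pderiv j g)))) := by
    intro k
    rw [Derivation.map_smul, pderiv_mul, pderiv_mul, pderiv_X, Pi.single_apply]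
    rcases eq_or_ne k a with rfl | hk
    · simp [add_mul, mul_add, smul_add, mul_assoc, add_assoc]
    · simp [hk, add_mul, mul_add, smul_add, mul_assoc, add_assoc]
  simp only [this, Finset.sum_add_distrib, Finset.sum_ite_eq' Finset.univ a, Finset.mem_univ,
    if_true]
  ring

private lemma piece1 {d : ℕ} (c : Fin d → Fin d → Fin d → ℂ)
    (f g h : MvPolynomial (Fin d) ℂ) :
    (∑ a, ∑ b, ∑ m, c a b m • (X m *
        (∑ i, ∑ j, c i j a • (pderiv i f * pderiv j g)) * pderiv b h))
    = ∑ i, ∑ j, ∑ b, ∑ m, ∑ a, (c i j a * c a b m) •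
        (X m * (pderiv i f * pderiv j g * pderiv b h)) := by
  simp only [Finset.mul_sum, Finset.sum_mul, Finset.smul_sum, smul_mul_assoc,
    mul_smul_comm, smul_smul]
  refine sum5_eq ⟨fun p => (p.2.2.2.1, p.2.2.2.2, p.2.1, p.2.2.1, p.1),
    fun p => (p.2.2.2.2, p.2.2.1, p.2.2.2.1, p.1, p.2.1),
    fun _ => rfl, fun _ => rfl⟩ _ _ fun p => ?_
  obtain ⟨a, b, m, i, j⟩ := p
  simp only [Equiv.coe_fn_mk]
  simp only [smul_eq_C_mul, map_mul]
  ring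

private lemma piece2 {d : ℕ} (c : Fin d → Fin d → Fin d → ℂ)
    (f g h : MvPolynomial (Fin d) ℂ) :
    (∑ a, ∑ b, ∑ m, c a b m • (X m *
        (∑ i, ∑ j, ∑ k, c i j k • (X k * (pderiv a (pderiv i f) * pderiv j g))) * pderiv b h))
    = ∑ i, ∑ j, ∑ k, ∑ a, ∑ b, ∑ m, (c i j k * c a b m) •
        (X m * X k * (pderiv a (pderiv i f) * pderiv j g * pderiv b h)) := by
  simp only [Finset.mul_sum, Finset.sum_mul, Finset.smul_sum, smul_mul_assoc,
    mul_smul_comm, smul_smul]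
  refine sum6_eq ⟨fun p => (p.2.2.2.1, p.2.2.2.2.1, p.2.2.2.2.2, p.1, p.2.1, p.2.2.1),
    fun p => (p.2.2.2.1, p.2.2.2.2.1, p.2.2.2.2.2, p.1, p.2.1, p.2.2.1),
    fun _ => rfl, fun _ => rfl⟩ _ _ fun p => ?_
  obtain ⟨a, b, m, i, j, k⟩ := p
  simp only [Equiv.coe_fn_mk]
  simp only [smul_eq_C_mul, map_mul]
  ring

private lemma piece3 {d : ℕ} (c : Fin d → Fin d → Fin d → ℂ)
    (f g h : MvPolynomial (Fin d) ℂ) :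
    (∑ a, ∑ b, ∑ m, c a b m • (X m *
        (∑ i, ∑ j, ∑ k, c i j k • (X k * (pderiv i f * pderiv a (pderiv j g)))) * pderiv b h))
    = ∑ i, ∑ j, ∑ k, ∑ a, ∑ b, ∑ m, (c i j k * c a b m) •
        (X m * X k * (pderiv i f * pderiv a (pderiv j g) * pderiv b h)) := by
  simp only [Finset.mul_sum, Finset.sum_mul, Finset.smul_sum, smul_mul_assoc,
    mul_smul_comm, smul_smul]
  refine sum6_eq ⟨fun p => (p.2.2.2.1, p.2.2.2.2.1, p.2.2.2.2.2, p.1, p.2.1, p.2.2.1),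
    fun p => (p.2.2.2.1, p.2.2.2.2.1, p.2.2.2.2.2, p.1, p.2.1, p.2.2.1),
    fun _ => rfl, fun _ => rfl⟩ _ _ fun p => ?_
  obtain ⟨a, b, m, i, j, k⟩ := p
  simp only [Equiv.coe_fn_mk]
  simp only [smul_eq_C_mul, map_mul]
  ring

private lemma decomp {d : ℕ} (c : Fin d → Fin d → Fin d → ℂ)
    (f g h : MvPolynomial (Fin d) ℂ) :
    (∑ a, ∑ b, ∑ m, c a b m • (X m *
        pderiv a (∑ i, ∑ j, ∑ k, c i j k • (X k * pderiv i f * pderiv j g)) * pderiv b h))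
    = (∑ i, ∑ j, ∑ b, ∑ m, ∑ a, (c i j a * c a b m) •
        (X m * (pderiv i f * pderiv j g * pderiv b h)))
    + (∑ i, ∑ j, ∑ k, ∑ a, ∑ b, ∑ m, (c i j k * c a b m) •
        (X m * X k * (pderiv a (pderiv i f) * pderiv j g * pderiv b h)))
    + (∑ i, ∑ j, ∑ k, ∑ a, ∑ b, ∑ m, (c i j k * c a b m) •
        (X m * X k * (pderiv i f * pderiv a (pderiv j g) * pderiv b h))) := by
  simp only [pderiv_br c f g]
  simp only [add_mul, mul_add, smul_add, Finset.sum_add_distrib]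
  rw [piece1 c f g h, piece2 c f g h, piece3 c f g h]

private lemma Bneg {d : ℕ} (c : Fin d → Fin d → Fin d → ℂ)
    (hanti : ∀ i j k, c i j k = - c j i k)
    (f g h : MvPolynomial (Fin d) ℂ) :
    (∑ i, ∑ j, ∑ k, ∑ a, ∑ b, ∑ m, (c i j k * c a b m) •
        (X m * X k * (pderiv i f * pderiv a (pderiv j g) * pderiv b h)))
    = - ∑ i, ∑ j, ∑ k, ∑ a, ∑ b, ∑ m, (c i j k * c a b m) •
        (X m * X k * (pderiv a (pderiv i g) * pderiv j h * pderiv b f)) := by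
  have key : (∑ i, ∑ j, ∑ k, ∑ a, ∑ b, ∑ m, (c i j k * c a b m) •
        (X m * X k * (pderiv i f * pderiv a (pderiv j g) * pderiv b h)))
      = ∑ i, ∑ j, ∑ k, ∑ a, ∑ b, ∑ m, -((c i j k * c a b m) •
        (X m * X k * (pderiv a (pderiv i g) * pderiv j h * pderiv b f))) := by
    refine sum6_eq ⟨fun p => (p.2.2.2.1, p.2.2.2.2.1, p.2.2.2.2.2, p.2.1, p.1, p.2.2.1),
      fun q => (q.2.2.2.2.1, q.2.2.2.1, q.2.2.2.2.2, q.1, q.2.1, q.2.2.1),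
      fun _ => rfl, fun _ => rfl⟩ _ _ fun p => ?_
    obtain ⟨i, j, k, a, b, m⟩ := p
    simp only [Equiv.coe_fn_mk]
    rw [hanti j i k, pd_comm j a g]
    simp only [smul_eq_C_mul, map_mul, map_neg]
    ring
  rw [key]
  simp [Finset.sum_neg_distrib]

private lemma Ccyc {d : ℕ} (c : Fin d → Fin d → Fin d → ℂ)
    (hjacc : ∀ i j l m,
      ∑ k, (c i j k * c k l m + c j l k * c k i m + c l i k * c k j m) = 0)
    (f g h : MvPolynomial (Fin d) ℂ) :
    (∑ i, ∑ j, ∑ b, ∑ m, ∑ a, (c i j a * c a b m) •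
        (X m * (pderiv i f * pderiv j g * pderiv b h)))
    + (∑ i, ∑ j, ∑ b, ∑ m, ∑ a, (c i j a * c a b m) •
        (X m * (pderiv i g * pderiv j h * pderiv b f)))
    + (∑ i, ∑ j, ∑ b, ∑ m, ∑ a, (c i j a * c a b m) •
        (X m * (pderiv i h * pderiv j f * pderiv b g))) = 0 := by
  have h2 : (∑ i, ∑ j, ∑ b, ∑ m, ∑ a, (c i j a * c a b m) •
        (X m * (pderiv i g * pderiv j h * pderiv b f)))
      = ∑ i, ∑ j, ∑ b, ∑ m, ∑ a, (c j b a * c a i m) •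
        (X m * (pderiv i f * pderiv j g * pderiv b h)) := by
    refine sum5_eq ⟨fun p => (p.2.2.1, p.1, p.2.1, p.2.2.2.1, p.2.2.2.2),
      fun q => (q.2.1, q.2.2.1, q.1, q.2.2.2.1, q.2.2.2.2),
      fun _ => rfl, fun _ => rfl⟩ _ _ fun p => ?_
    obtain ⟨i, j, b, m, a⟩ := p
    simp only [Equiv.coe_fn_mk]
    simp only [smul_eq_C_mul, map_mul]
    ring
  have h3 : (∑ i, ∑ j, ∑ b, ∑ m, ∑ a, (c i j a * c a b m) •
        (X m * (pderiv i h * pderiv j f * pderiv b g)))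
      = ∑ i, ∑ j, ∑ b, ∑ m, ∑ a, (c b i a * c a j m) •
        (X m * (pderiv i f * pderiv j g * pderiv b h)) := by
    refine sum5_eq ⟨fun p => (p.2.1, p.2.2.1, p.1, p.2.2.2.1, p.2.2.2.2),
      fun q => (q.2.2.1, q.1, q.2.1, q.2.2.2.1, q.2.2.2.2),
      fun _ => rfl, fun _ => rfl⟩ _ _ fun p => ?_
    obtain ⟨i, j, b, m, a⟩ := p
    simp only [Equiv.coe_fn_mk]
    simp only [smul_eq_C_mul, map_mul]
    ring
  rw [h2, h3]
  simp only [← Finset.sum_add_distrib, ← add_smul, ← Finset.sum_smul]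
  simp only [hjacc, zero_smul, Finset.sum_const_zero]

/-- Theorem 5.31 (Kirillov–Kostant): the structure constants of a Lie algebra
induce a Poisson algebra structure on the polynomial ring. -/
theorem stmt9 (d : ℕ) (c : Fin d → Fin d → Fin d → ℂ)
    (hanti : ∀ i j k, c i j k = - c j i k)
    (hjacc : ∀ i j l m,
      ∑ k, (c i j k * c k l m + c j l k * c k i m + c l i k * c k j m) = 0)
    (br : MvPolynomial (Fin d) ℂ → MvPolynomial (Fin d) ℂ → MvPolynomial (Fin d) ℂ)
    (hbr : br = fun f g => ∑ i, ∑ j, ∑ k,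
      c i j k • (X k * (pderiv i f) * (pderiv j g))) :
    (∀ (a : ℂ) (f f' g : MvPolynomial (Fin d) ℂ),
        br (a • f + f') g = a • br f g + br f' g) ∧
    (∀ (a : ℂ) (f g g' : MvPolynomial (Fin d) ℂ),
        br f (a • g + g') = a • br f g + br f g') ∧
    (∀ f g : MvPolynomial (Fin d) ℂ, br f g = - br g f) ∧
    (∀ f g h : MvPolynomial (Fin d) ℂ, br f (g * h) = br f g * h + g * br f h) ∧
    (∀ f₁ f₂ f₃ : MvPolynomial (Fin d) ℂ,
        br (br f₁ f₂) f₃ + br (br f₂ f₃) f₁ + br (br f₃ f₁) f₂ = 0) := by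
  subst hbr
  refine ⟨?_, ?_, ?_, ?_, ?_⟩
  · intro a f f' g
    simp only [map_add, Derivation.map_smul, Finset.smul_sum, ← Finset.sum_add_distrib]
    refine Finset.sum_congr rfl fun i _ => Finset.sum_congr rfl fun j _ =>
      Finset.sum_congr rfl fun k _ => ?_
    simp only [smul_eq_C_mul]
    ring
  · intro a f g g'
    simp only [map_add, Derivation.map_smul, Finset.smul_sum, ← Finset.sum_add_distrib]
    refine Finset.sum_congr rfl fun i _ => Finset.sum_congr rfl fun j _ =>
      Finset.sum_congr rfl fun k _ => ?_
    simp only [smul_eq_C_mul]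
    ring
  · intro f g
    beta_reduce
    have key : (∑ i, ∑ j, ∑ k, c i j k • (X k * pderiv i f * pderiv j g))
        = ∑ i, ∑ j, ∑ k, -(c i j k • (X k * pderiv i g * pderiv j f)) := by
      refine sum3_eq ⟨fun p => (p.2.1, p.1, p.2.2), fun p => (p.2.1, p.1, p.2.2),
        fun _ => rfl, fun _ => rfl⟩ _ _ fun p => ?_
      obtain ⟨i, j, k⟩ := p
      simp only [Equiv.coe_fn_mk]
      rw [hanti j i k]
      simp only [smul_eq_C_mul, map_neg]
      ring
    rw [key]
    simp [Finset.sum_neg_distrib]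
  · intro f g h
    simp only [pderiv_mul, Finset.sum_mul, Finset.mul_sum, ← Finset.sum_add_distrib]
    refine Finset.sum_congr rfl fun i _ => Finset.sum_congr rfl fun j _ =>
      Finset.sum_congr rfl fun k _ => ?_
    simp only [smul_eq_C_mul]
    ring
  · intro f₁ f₂ f₃
    beta_reduce
    rw [decomp c f₁ f₂ f₃, decomp c f₂ f₃ f₁, decomp c f₃ f₁ f₂,
      Bneg c hanti f₁ f₂ f₃, Bneg c hanti f₂ f₃ f₁, Bneg c hanti f₃ f₁ f₂]
    have hC := Ccyc c hjacc f₁ f₂ f₃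
    linear_combination hC
end

section
/- Let d be a natural number and let c : Fin d → Fin d → Fin d → ℂ satisfy c i j k = − c j i k for all i, j, k, and the Jacobi identity of structure constants: for all i, j, l, m, Σ_k (c i j k * c k l m + c j l k * c k i m + c l i k * c k j m) = 0. Define ω i j := Σ_k c i j k • X k in MvPolynomial (Fin d) ℂ. Then for all indices i, j, l: Σ_k ( (pderiv k (ω i j)) * (ω k l) + (pderiv k (ω j l)) * (ω k i) + (pderiv k (ω l i)) * (ω k j) ) = 0. -/
open MvPolynomial

lemma pderiv_omega (d : ℕ) (c : Fin d → Fin d → Fin d → ℂ) (i j k : Fin d) :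
    pderiv k (∑ m, c i j m • (X m : MvPolynomial (Fin d) ℂ)) = C (c i j k) := by
  rw [map_sum]
  rw [Finset.sum_eq_single k]
  · simp [pderiv_X, Pi.single_eq_same, smul_eq_C_mul]
  · intro b _ hb
    simp [pderiv_X, Pi.single_eq_of_ne hb]
  · simp

/-- Key identity in the proof of the Kirillov–Kostant theorem: the Jacobi
identity of structure constants implies the cyclic identity for
`ω i j = ∑ k, c i j k • X k`. -/
theorem stmt10 (d : ℕ) (c : Fin d → Fin d → Fin d → ℂ)
    (hanti : ∀ i j k, c i j k = - c j i k)
    (hjacc : ∀ i j l m,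
      ∑ k, (c i j k * c k l m + c j l k * c k i m + c l i k * c k j m) = 0)
    (ω : Fin d → Fin d → MvPolynomial (Fin d) ℂ)
    (hω : ω = fun i j => ∑ k, c i j k • (X k : MvPolynomial (Fin d) ℂ)) :
    ∀ i j l, ∑ k,
      ((pderiv k (ω i j)) * (ω k l) + (pderiv k (ω j l)) * (ω k i)
        + (pderiv k (ω l i)) * (ω k j)) = 0 := by
  intro i j l
  subst hω
  simp only [pderiv_omega d c]
  calc ∑ k, (C (c i j k) * (∑ m, c k l m • (X m : MvPolynomial (Fin d) ℂ))
        + C (c j l k) * (∑ m, c k i m • (X m : MvPolynomial (Fin d) ℂ))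
        + C (c l i k) * (∑ m, c k j m • (X m : MvPolynomial (Fin d) ℂ)))
      = ∑ m, (∑ k, (c i j k * c k l m + c j l k * c k i m + c l i k * c k j m))
          • (X m : MvPolynomial (Fin d) ℂ) := by
        simp only [Finset.mul_sum, ← Finset.sum_add_distrib, Finset.sum_smul]
        rw [Finset.sum_comm]
        refine Finset.sum_congr rfl fun k _ => Finset.sum_congr rfl fun m _ => ?_
        simp [smul_eq_C_mul, map_add, map_mul]
        ring
    _ = 0 := by simp [hjacc]
end

section
/- Let P := MvPolynomial (Fin 2) ℂ, let ν ∈ ℂ, and let H : Matrix (Fin 2) (Fin 2) ℂ. Define the star product f *_H g := Σ_{l≥0} (ν^l / l!) Σ_{i : Fin l → Fin 2, j : Fin l → Fin 2} (Π_m H (i m) (j m)) • ((pderiv (i 1) ∘ ⋯ ∘ pderiv (i l)) f) * ((pderiv (j 1) ∘ ⋯ ∘ pderiv (j l)) g); on polynomials this sum has only finitely many nonzero terms, so it is well defined. Write H = J + K where J := (H − Hᵀ)/2 is the antisymmetric part and K := (H + Hᵀ)/2 is the symmetric part, and define T : P → P by T f := Σ_{l≥0} (1/l!) • ((−ν/2)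 • Σ_{i,j} K i j • (pderiv i ∘ pderiv j))^l f (again a finite sum on each polynomial). Then: (1) T is a ℂ-linear bijection of P; (2) T 1 = 1; (3) T (f *_H g) = (T f) *_J (T g) for all f, g ∈ P. In particular, the algebras (P, *_H) and (P, *_J) are isomorphic as ℂ-algebras. -/
open MvPolynomial

section PD
variable {σ : Type*} {R : Type*} [CommRing R]

lemma pderiv_totalDegree_le (i : σ) (f : MvPolynomial σ R) {d : ℕ}
    (h : f.totalDegree ≤ d + 1) : (pderiv i f).totalDegree ≤ d := by
  classical
  conv_lhs => rw [f.as_sum]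
  rw [map_sum]
  refine (totalDegree_finset_sum _ _).trans (Finset.sup_le fun s hs => ?_)
  rw [pderiv_monomial]
  by_cases h0 : s i = 0
  · simp [h0]
  · refine (totalDegree_monomial_le _ _).trans ?_
    have hle : Finsupp.single i 1 ≤ s := by
      rw [Finsupp.single_le_iff]; omega
    have hsum : ((s - Finsupp.single i 1).sum fun _ e => e) + 1 = s.sum fun _ e => e := by
      have := Finsupp.sum_add_index (f := s - Finsupp.single i 1) (g := Finsupp.single i 1)
        (h := fun (_ : σ) (e : ℕ) => e) (by simp) (by simp)
      rw [tsub_add_cancel_of_le hle] at this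
      rw [this, Finsupp.sum_single_index] <;> simp
    have hdeg : (s.sum fun _ e => e) ≤ d + 1 :=
      le_trans (le_totalDegree (by simpa using hs)) h
    simp only [Finsupp.sum, id_eq] at hsum hdeg ⊢
    omega

lemma pderiv_eq_zero_of_totalDegree (i : σ) (f : MvPolynomial σ R)
    (h : f.totalDegree = 0) : pderiv i f = 0 := by
  classical
  conv_lhs => rw [f.as_sum]
  rw [map_sum]
  refine Finset.sum_eq_zero fun s hs => ?_
  have := (totalDegree_eq_zero_iff σ f).mp h s hs i
  simp [pderiv_monomial, this]

lemma pderiv_totalDegree_le' (i : σ) (f : MvPolynomial σ R) {d : ℕ}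
    (h : f.totalDegree ≤ d) : (pderiv i f).totalDegree ≤ d := by
  cases d with
  | zero => rw [pderiv_eq_zero_of_totalDegree i f (Nat.le_zero.mp h)]; simp
  | succ e => exact (pderiv_totalDegree_le i f h).trans (Nat.le_succ e)

lemma pderiv_comm' (i j : σ) (f : MvPolynomial σ R) :
    pderiv i (pderiv j f) = pderiv j (pderiv i f) := by
  classical
  induction f using MvPolynomial.induction_on' with
  | monomial s a =>
    simp only [pderiv_monomial]
    by_cases hij : i = j
    · subst hij; rfl
    · rw [Finsupp.tsub_apply, Finsupp.tsub_apply, Finsupp.single_eq_of_ne hij,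
        Finsupp.single_eq_of_ne (Ne.symm hij), tsub_right_comm]
      simp only [Nat.sub_zero]
      rw [mul_right_comm]
  | add p q hp hq => simp [hp, hq]
end PD


section ExpFramework

variable {V : Type*} [AddCommGroup V] [Module ℂ V]

/-- `L` lowers the filtration `W` (with `W 0 = ⊥` in applications). -/
def Lowers (W : ℕ → Submodule ℂ V) (L : Module.End ℂ V) : Prop :=
  ∀ d : ℕ, ∀ v ∈ W (d + 1), L v ∈ W d

lemma Lowers.add {W : ℕ → Submodule ℂ V} {A B : Module.End ℂ V}
    (hA : Lowers W A) (hB : Lowers W B) : Lowers W (A + B) :=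
  fun d v hv => (W d).add_mem (hA d v hv) (hB d v hv)

lemma Lowers.smul {W : ℕ → Submodule ℂ V} {A : Module.End ℂ V} (c : ℂ)
    (hA : Lowers W A) : Lowers W (c • A) :=
  fun d v hv => (W d).smul_mem c (hA d v hv)

lemma Lowers.neg {W : ℕ → Submodule ℂ V} {A : Module.End ℂ V}
    (hA : Lowers W A) : Lowers W (-A) := by
  have := hA.smul (-1)
  simpa using this

lemma Lowers.sum {W : ℕ → Submodule ℂ V} {ι : Type*} (s : Finset ι)
    {A : ι → Module.End ℂ V} (hA : ∀ i ∈ s, Lowers W (A i)) :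
    Lowers W (∑ i ∈ s, A i) := fun d v hv => by
  rw [LinearMap.sum_apply]
  exact Submodule.sum_mem _ fun i hi => hA i hi d v hv

lemma Lowers.pow_mem {W : ℕ → Submodule ℂ V} {A : Module.End ℂ V}
    (hA : Lowers W A) (e : ℕ) : ∀ d : ℕ, ∀ v ∈ W (d + e), (A ^ e) v ∈ W d := by
  induction e with
  | zero => intro d v hv; simpa using hv
  | succ e ih =>
    intro d v hv
    have h1 : A v ∈ W (d + e) := hA (d + e) v (by rwa [show d + (e+1) = (d+e)+1 by ring] at hv)
    have := ih d (A v) h1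
    rwa [pow_succ, Module.End.mul_apply]

lemma Lowers.pow_eq_zero {W : ℕ → Submodule ℂ V} (hW0 : W 0 = ⊥)
    {A : Module.End ℂ V} (hA : Lowers W A) {d : ℕ} {v : V} (hv : v ∈ W d)
    {n : ℕ} (hn : d ≤ n) : (A ^ n) v = 0 := by
  obtain ⟨e, rfl⟩ := Nat.exists_eq_add_of_le hn
  have h1 : (A ^ d) v ∈ W 0 := hA.pow_mem d 0 v (by simpa using hv)
  rw [hW0, Submodule.mem_bot] at h1
  rw [add_comm, pow_add, Module.End.mul_apply, h1, map_zero]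

/-- Exponential of a (locally nilpotent) operator, applied pointwise. -/
noncomputable def expOp (L : Module.End ℂ V) (v : V) : V :=
  ∑ᶠ l : ℕ, ((l.factorial : ℂ))⁻¹ • (L ^ l) v

lemma expOp_eq_sum {L : Module.End ℂ V} {v : V} {d : ℕ}
    (h : ∀ n, d ≤ n → (L ^ n) v = 0) :
    expOp L v = ∑ l ∈ Finset.range d, ((l.factorial : ℂ))⁻¹ • (L ^ l) v := by
  refine finsum_eq_sum_of_support_subset _ fun n hn => ?_
  simp only [Function.mem_support] at hn
  by_contra hmem
  simp only [Finset.coe_range, Set.mem_Iio, not_lt] at hmem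
  exact hn (by rw [h n hmem, smul_zero])

lemma expOp_zero_apply (v : V) : expOp (0 : Module.End ℂ V) v = v := by
  have : expOp (0 : Module.End ℂ V) v
      = ∑ l ∈ Finset.range 1, ((l.factorial : ℂ))⁻¹ • ((0 : Module.End ℂ V) ^ l) v := by
    refine expOp_eq_sum fun n hn => ?_
    rw [zero_pow (by omega), LinearMap.zero_apply]
  simp [this]

lemma expOp_mem {W : ℕ → Submodule ℂ V} (hW0 : W 0 = ⊥) (hWmono : Monotone W)
    {A : Module.End ℂ V} (hA : Lowers W A) {v : V} {d : ℕ} (hv : v ∈ W d) :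
    expOp A v ∈ W d := by
  rw [expOp_eq_sum fun n hn => hA.pow_eq_zero hW0 hv hn]
  refine Submodule.sum_mem _ fun l hl => Submodule.smul_mem _ _ ?_
  rw [Finset.mem_range] at hl
  exact hWmono (Nat.sub_le d l) (hA.pow_mem l (d - l) v (by rwa [Nat.sub_add_cancel hl.le]))

lemma expOp_add_smul {W : ℕ → Submodule ℂ V} (hW0 : W 0 = ⊥)
    {A : Module.End ℂ V} (hA : Lowers W A)
    {u v : V} {d : ℕ} (hu : u ∈ W d) (hv : v ∈ W d) (a : ℂ) :
    expOp A (a • u + v) = a • expOp A u + expOp A v := by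
  have hz : ∀ w ∈ W d, ∀ n, d ≤ n → (A ^ n) w = 0 := fun w hw n hn =>
    hA.pow_eq_zero hW0 hw hn
  have huv : a • u + v ∈ W d := (W d).add_mem ((W d).smul_mem a hu) hv
  rw [expOp_eq_sum (hz _ huv), expOp_eq_sum (hz _ hu), expOp_eq_sum (hz _ hv),
    Finset.smul_sum, ← Finset.sum_add_distrib]
  refine Finset.sum_congr rfl fun l _ => ?_
  rw [map_add, map_smul, smul_add, smul_comm a]

lemma factorial_inv_mul_choose (m k : ℕ) (hk : k ≤ m) :
    ((m.factorial : ℂ))⁻¹ * (m.choose k : ℂ)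
      = ((k.factorial : ℂ))⁻¹ * (((m - k).factorial : ℂ))⁻¹ := by
  have h := Nat.choose_mul_factorial_mul_factorial hk
  have h2 : ((m.choose k : ℂ)) * (k.factorial : ℂ) * ((m - k).factorial : ℂ)
      = (m.factorial : ℂ) := by exact_mod_cast congrArg (Nat.cast : ℕ → ℂ) h
  field_simp [Nat.factorial_ne_zero]
  linear_combination h2

lemma triangle_sum_eq_square {G : ℕ → ℕ → V} {d : ℕ}
    (hG : ∀ k l, d ≤ k + l → G k l = 0) :
    ∑ m ∈ Finset.range d, ∑ k ∈ Finset.range (m + 1), G k (m - k)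
      = ∑ k ∈ Finset.range d, ∑ l ∈ Finset.range d, G k l := by
  classical
  have h1 : (∑ m ∈ Finset.range d, ∑ k ∈ Finset.range (m + 1), G k (m - k))
      = ∑ p ∈ (Finset.range d).sigma (fun m => Finset.range (m + 1)), G p.2 (p.1 - p.2) := by
    rw [Finset.sum_sigma]
  have h2 : (∑ k ∈ Finset.range d, ∑ l ∈ Finset.range d, G k l)
      = ∑ q ∈ Finset.range d ×ˢ Finset.range d, G q.1 q.2 := by
    rw [Finset.sum_product]
  rw [h1, h2, ← Finset.sum_filter_of_ne (p := fun q : ℕ × ℕ => q.1 + q.2 < d)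
    (fun q _ hq => by by_contra h; exact hq (hG q.1 q.2 (by omega)))]
  refine Finset.sum_nbij' (i := fun p : (Σ _ : ℕ, ℕ) => (p.2, p.1 - p.2))
    (j := fun q : ℕ × ℕ => ⟨q.1 + q.2, q.1⟩) ?_ ?_ ?_ ?_ ?_
  · rintro ⟨m, k⟩ hp
    simp only [Finset.mem_sigma, Finset.mem_range] at hp
    simp only [Finset.mem_filter, Finset.mem_product, Finset.mem_range]
    omega
  · rintro ⟨k, l⟩ hq
    simp only [Finset.mem_filter, Finset.mem_product, Finset.mem_range] at hq
    simp only [Finset.mem_sigma, Finset.mem_range]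
    omega
  · rintro ⟨m, k⟩ hp
    simp only [Finset.mem_sigma, Finset.mem_range] at hp
    dsimp only
    simp only [Sigma.mk.inj_iff]
    constructor
    · omega
    · exact heq_of_eq rfl
  · rintro ⟨k, l⟩ hq
    simp only [Finset.mem_filter, Finset.mem_product, Finset.mem_range] at hq
    dsimp only
    simp only [Prod.mk.injEq]
    exact ⟨trivial, by omega⟩
  · rintro ⟨m, k⟩ _
    rfl

lemma expOp_add_apply {W : ℕ → Submodule ℂ V} (hW0 : W 0 = ⊥)
    {A B : Module.End ℂ V} (hA : Lowers W A) (hB : Lowers W B)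
    (hAB : Commute A B) {v : V} {d : ℕ} (hv : v ∈ W d) :
    expOp (A + B) v = expOp A (expOp B v) := by
  classical
  have hmix : ∀ k l : ℕ, d ≤ k + l → (A ^ k) ((B ^ l) v) = 0 := by
    intro k l hkl
    rcases le_or_gt d l with h | h
    · rw [hB.pow_eq_zero hW0 hv h, map_zero]
    · have h1 : (B ^ l) v ∈ W (d - l) := hB.pow_mem l (d - l) v (by rwa [Nat.sub_add_cancel h.le])
      exact hA.pow_eq_zero hW0 h1 (by omega)
  have hBv : expOp B v = ∑ l ∈ Finset.range d, ((l.factorial : ℂ))⁻¹ • (B ^ l) v :=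
    expOp_eq_sum fun n hn => hB.pow_eq_zero hW0 hv hn
  have hABn : ∀ n, d ≤ n → (A ^ n) (expOp B v) = 0 := by
    intro n hn
    rw [hBv, map_sum]
    refine Finset.sum_eq_zero fun l _ => ?_
    rw [map_smul, hmix n l (by omega), smul_zero]
  have hRHS : expOp A (expOp B v)
      = ∑ k ∈ Finset.range d, ∑ l ∈ Finset.range d,
          (((k.factorial : ℂ))⁻¹ * ((l.factorial : ℂ))⁻¹) • (A ^ k) ((B ^ l) v) := by
    rw [expOp_eq_sum hABn]
    refine Finset.sum_congr rfl fun k _ => ?_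
    rw [hBv, map_sum, Finset.smul_sum]
    refine Finset.sum_congr rfl fun l _ => ?_
    rw [map_smul, smul_smul]
  have hABlow : Lowers W (A + B) := hA.add hB
  have hLHS : expOp (A + B) v
      = ∑ m ∈ Finset.range d, ∑ k ∈ Finset.range (m + 1),
          (((k.factorial : ℂ))⁻¹ * (((m - k).factorial : ℂ))⁻¹) • (A ^ k) ((B ^ (m - k)) v) := by
    rw [expOp_eq_sum fun n hn => hABlow.pow_eq_zero hW0 hv hn]
    refine Finset.sum_congr rfl fun m _ => ?_
    rw [Commute.add_pow hAB, LinearMap.sum_apply, Finset.smul_sum]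
    refine Finset.sum_congr rfl fun k hk => ?_
    rw [Finset.mem_range] at hk
    simp only [Module.End.mul_apply, Module.End.natCast_apply, map_nsmul]
    rw [← Nat.cast_smul_eq_nsmul ℂ, smul_smul, factorial_inv_mul_choose m k (by omega)]
  rw [hLHS, hRHS]
  exact triangle_sum_eq_square
    (G := fun k l => (((k.factorial : ℂ))⁻¹ * ((l.factorial : ℂ))⁻¹) • (A ^ k) ((B ^ l) v))
    fun k l hkl => by rw [hmix k l hkl, smul_zero]

end ExpFramework

open MvPolynomial TensorProduct

noncomputable section Setup

abbrev P2 : Type := MvPolynomial (Fin 2) ℂ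
abbrev PP : Type := TensorProduct ℂ P2 P2

def pd (i : Fin 2) : Module.End ℂ P2 := (pderiv i).toLinearMap

@[simp] lemma pd_apply (i : Fin 2) (f : P2) : pd i f = pderiv i f := rfl

def WP : ℕ → Submodule ℂ P2
  | 0 => ⊥
  | d + 1 => restrictTotalDegree (Fin 2) ℂ d

lemma WP_zero : WP 0 = ⊥ := rfl

lemma mem_WP_succ {f : P2} {d : ℕ} : f ∈ WP (d + 1) ↔ f.totalDegree ≤ d :=
  mem_restrictTotalDegree _ _ f

def WPP : ℕ → Submodule ℂ PP
  | 0 => ⊥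
  | d + 1 => Submodule.span ℂ
      {x | ∃ f g : P2, f.totalDegree + g.totalDegree ≤ d ∧ x = f ⊗ₜ[ℂ] g}

lemma WPP_zero : WPP 0 = ⊥ := rfl

lemma tmul_mem_WPP {u v : P2} {d : ℕ}
    (h : u.totalDegree + v.totalDegree + 1 ≤ d) : u ⊗ₜ[ℂ] v ∈ WPP d := by
  cases d with
  | zero => omega
  | succ e => exact Submodule.subset_span ⟨u, v, by omega, rfl⟩

lemma WPP_mono : Monotone WPP := by
  refine monotone_nat_of_le_succ fun d => ?_
  cases d with
  | zero => exact bot_le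
  | succ e =>
    refine Submodule.span_mono fun x hx => ?_
    obtain ⟨f, g, h, rfl⟩ := hx
    exact ⟨f, g, by omega, rfl⟩

lemma exists_mem_WPP (x : PP) : ∃ d, x ∈ WPP d := by
  induction x using TensorProduct.induction_on with
  | zero => exact ⟨0, Submodule.zero_mem _⟩
  | tmul f g => exact ⟨f.totalDegree + g.totalDegree + 1, tmul_mem_WPP le_rfl⟩
  | add x y hx hy =>
    obtain ⟨d1, h1⟩ := hx
    obtain ⟨d2, h2⟩ := hy
    exact ⟨max d1 d2, Submodule.add_mem _ (WPP_mono (le_max_left _ _) h1)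
      (WPP_mono (le_max_right _ _) h2)⟩

lemma apply_span_mem {V W : Type*} [AddCommGroup V] [Module ℂ V]
    [AddCommGroup W] [Module ℂ W] (L : V →ₗ[ℂ] W) {S : Set V} {N : Submodule ℂ W}
    (h : ∀ x ∈ S, L x ∈ N) {v : V} (hv : v ∈ Submodule.span ℂ S) : L v ∈ N :=
  (Submodule.map_span_le L S N).mpr h ⟨v, hv, rfl⟩

lemma lowers_pd_pd (i j : Fin 2) : Lowers WP (pd i * pd j) := by
  intro d v hv
  cases d with
  | zero =>
    have h0 : v.totalDegree = 0 := Nat.le_zero.mp (mem_WP_succ.mp hv)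
    have : pderiv j v = 0 := pderiv_eq_zero_of_totalDegree j v h0
    simp [WP_zero, Module.End.mul_apply, this]
  | succ e =>
    have h0 : v.totalDegree ≤ e + 1 := mem_WP_succ.mp hv
    rw [Module.End.mul_apply]
    exact mem_WP_succ.mpr (pderiv_totalDegree_le' i _ (pderiv_totalDegree_le j v h0))

/-- the operator `D` built from `ν` and `K`. -/
def DK (ν : ℂ) (K : Matrix (Fin 2) (Fin 2) ℂ) : Module.End ℂ P2 :=
  (-ν / 2) • ∑ i, ∑ j, K i j •
    ((MvPolynomial.pderiv i).toLinearMap ∘ₗ (MvPolynomial.pderiv j).toLinearMap)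

lemma lowers_DK (ν : ℂ) (K : Matrix (Fin 2) (Fin 2) ℂ) : Lowers WP (DK ν K) := by
  refine Lowers.smul _ (Lowers.sum _ fun i _ => Lowers.sum _ fun j _ => Lowers.smul _ ?_)
  exact lowers_pd_pd i j

lemma DK_zero_of_deg_zero (ν : ℂ) (K : Matrix (Fin 2) (Fin 2) ℂ) {f : P2}
    (h : f.totalDegree = 0) : DK ν K f = 0 := by
  have := lowers_DK ν K 0 f (mem_WP_succ.mpr (by omega))
  rwa [WP_zero, Submodule.mem_bot] at this

lemma DK_deg_le (ν : ℂ) (K : Matrix (Fin 2) (Fin 2) ℂ) {f : P2} {a : ℕ}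
    (h : f.totalDegree ≤ a + 1) : (DK ν K f).totalDegree ≤ a :=
  mem_WP_succ.mp (lowers_DK ν K (a + 1) f (mem_WP_succ.mpr h))

/-- the bidifferential operator on the tensor square attached to a matrix. -/
def EM (M : Matrix (Fin 2) (Fin 2) ℂ) : Module.End ℂ PP :=
  ∑ i, ∑ j, M i j • TensorProduct.map (pd i) (pd j)

lemma lowers_map_pd (i j : Fin 2) : Lowers WPP (TensorProduct.map (pd i) (pd j)) := by
  intro d v hv
  have hv' : v ∈ Submodule.span ℂ
      {x | ∃ f g : P2, f.totalDegree + g.totalDegree ≤ d ∧ x = f ⊗ₜ[ℂ] g} := hv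
  refine apply_span_mem _ ?_ hv'
  rintro x ⟨f, g, hfg, rfl⟩
  rw [TensorProduct.map_tmul]
  rcases Nat.eq_zero_or_eq_succ_pred f.totalDegree with h0 | hs
  · rw [pd_apply, pderiv_eq_zero_of_totalDegree i f h0, TensorProduct.zero_tmul]
    exact Submodule.zero_mem _
  · have h1 : (pderiv i f).totalDegree ≤ f.totalDegree - 1 :=
      pderiv_totalDegree_le i f (by omega)
    have h2 : (pderiv j g).totalDegree ≤ g.totalDegree :=
      pderiv_totalDegree_le' j g le_rfl
    exact tmul_mem_WPP (by simp only [pd_apply]; omega)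

lemma lowers_EM (M : Matrix (Fin 2) (Fin 2) ℂ) : Lowers WPP (EM M) :=
  Lowers.sum _ fun i _ => Lowers.sum _ fun j _ => Lowers.smul _ (lowers_map_pd i j)

lemma lowers_rT (ν : ℂ) (K : Matrix (Fin 2) (Fin 2) ℂ) :
    Lowers WPP (LinearMap.rTensor P2 (DK ν K)) := by
  intro d v hv
  have hv' : v ∈ Submodule.span ℂ
      {x | ∃ f g : P2, f.totalDegree + g.totalDegree ≤ d ∧ x = f ⊗ₜ[ℂ] g} := hv
  refine apply_span_mem _ ?_ hv'
  rintro x ⟨f, g, hfg, rfl⟩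
  rw [LinearMap.rTensor_tmul]
  rcases Nat.eq_zero_or_eq_succ_pred f.totalDegree with h0 | hs
  · rw [DK_zero_of_deg_zero ν K h0, TensorProduct.zero_tmul]
    exact Submodule.zero_mem _
  · have h1 : (DK ν K f).totalDegree ≤ f.totalDegree - 1 := DK_deg_le ν K (by omega)
    exact tmul_mem_WPP (by omega)

lemma lowers_lT (ν : ℂ) (K : Matrix (Fin 2) (Fin 2) ℂ) :
    Lowers WPP (LinearMap.lTensor P2 (DK ν K)) := by
  intro d v hv
  have hv' : v ∈ Submodule.span ℂ
      {x | ∃ f g : P2, f.totalDegree + g.totalDegree ≤ d ∧ x = f ⊗ₜ[ℂ] g} := hv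
  refine apply_span_mem _ ?_ hv'
  rintro x ⟨f, g, hfg, rfl⟩
  rw [LinearMap.lTensor_tmul]
  rcases Nat.eq_zero_or_eq_succ_pred g.totalDegree with h0 | hs
  · rw [DK_zero_of_deg_zero ν K h0, TensorProduct.tmul_zero]
    exact Submodule.zero_mem _
  · have h1 : (DK ν K g).totalDegree ≤ g.totalDegree - 1 := DK_deg_le ν K (by omega)
    exact tmul_mem_WPP (by omega)

end Setup

noncomputable section Comms
open MvPolynomial TensorProduct

lemma pd_comm_s11 (i j : Fin 2) : Commute (pd i) (pd j) := by
  refine LinearMap.ext fun f => ?_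
  simp only [Module.End.mul_apply, pd_apply]
  exact pderiv_comm' i j f

lemma comm_map {u v u' v' : Module.End ℂ P2} (h1 : Commute u u') (h2 : Commute v v') :
    Commute (TensorProduct.map u v) (TensorProduct.map u' v') := by
  unfold Commute SemiconjBy
  rw [Module.End.mul_eq_comp, Module.End.mul_eq_comp, ← TensorProduct.map_comp,
    ← TensorProduct.map_comp, ← Module.End.mul_eq_comp, ← Module.End.mul_eq_comp,
    ← Module.End.mul_eq_comp, ← Module.End.mul_eq_comp, h1.eq, h2.eq]

lemma rT_eq_map (A : Module.End ℂ P2) :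
    LinearMap.rTensor P2 A = TensorProduct.map A (1 : Module.End ℂ P2) := rfl

lemma lT_eq_map (A : Module.End ℂ P2) :
    LinearMap.lTensor P2 A = TensorProduct.map (1 : Module.End ℂ P2) A := rfl

lemma commDK_pd (ν : ℂ) (K : Matrix (Fin 2) (Fin 2) ℂ) (a : Fin 2) :
    Commute (DK ν K) (pd a) := by
  unfold DK
  refine Commute.smul_left ?_ _
  refine Commute.sum_left _ _ _ fun i _ => Commute.sum_left _ _ _ fun j _ => ?_
  refine Commute.smul_left ?_ _
  exact ((pd_comm_s11 i a).mul_left (pd_comm_s11 j a) : Commute (pd i * pd j) (pd a))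

lemma commRT_map (ν : ℂ) (K : Matrix (Fin 2) (Fin 2) ℂ) (a b : Fin 2) :
    Commute (LinearMap.rTensor P2 (DK ν K)) (TensorProduct.map (pd a) (pd b)) := by
  rw [rT_eq_map]
  exact comm_map (commDK_pd ν K a) (Commute.one_left (pd b))

lemma commLT_map (ν : ℂ) (K : Matrix (Fin 2) (Fin 2) ℂ) (a b : Fin 2) :
    Commute (LinearMap.lTensor P2 (DK ν K)) (TensorProduct.map (pd a) (pd b)) := by
  rw [lT_eq_map]
  exact comm_map (Commute.one_left (pd a)) (commDK_pd ν K b)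

lemma commRT_EM (ν : ℂ) (K : Matrix (Fin 2) (Fin 2) ℂ) (M : Matrix (Fin 2) (Fin 2) ℂ) :
    Commute (LinearMap.rTensor P2 (DK ν K)) (EM M) := by
  refine Commute.sum_right _ _ _ fun i _ => Commute.sum_right _ _ _ fun j _ => ?_
  exact Commute.smul_right (commRT_map ν K i j) _

lemma commLT_EM (ν : ℂ) (K : Matrix (Fin 2) (Fin 2) ℂ) (M : Matrix (Fin 2) (Fin 2) ℂ) :
    Commute (LinearMap.lTensor P2 (DK ν K)) (EM M) := by
  refine Commute.sum_right _ _ _ fun i _ => Commute.sum_right _ _ _ fun j _ => ?_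
  exact Commute.smul_right (commLT_map ν K i j) _

lemma commEM_EM (M M' : Matrix (Fin 2) (Fin 2) ℂ) : Commute (EM M) (EM M') := by
  refine Commute.sum_left _ _ _ fun i _ => Commute.sum_left _ _ _ fun j _ => ?_
  refine Commute.smul_left ?_ _
  refine Commute.sum_right _ _ _ fun a _ => Commute.sum_right _ _ _ fun b _ => ?_
  exact Commute.smul_right (comm_map (pd_comm_s11 i a) (pd_comm_s11 j b)) _

lemma commRT_LT (ν : ℂ) (K : Matrix (Fin 2) (Fin 2) ℂ) :
    Commute (LinearMap.rTensor P2 (DK ν K)) (LinearMap.lTensor P2 (DK ν K)) := by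
  rw [rT_eq_map, lT_eq_map]
  exact comm_map (Commute.one_right _) (Commute.one_left _)

/-- additivity of `EM` in the matrix argument -/
lemma EM_add (M M' : Matrix (Fin 2) (Fin 2) ℂ) : EM (M + M') = EM M + EM M' := by
  unfold EM
  rw [← Finset.sum_add_distrib]
  refine Finset.sum_congr rfl fun i _ => ?_
  rw [← Finset.sum_add_distrib]
  refine Finset.sum_congr rfl fun j _ => ?_
  rw [Matrix.add_apply, add_smul]

end Comms

section Leibniz
open MvPolynomial TensorProduct

lemma DK_mul (ν : ℂ) (K : Matrix (Fin 2) (Fin 2) ℂ)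
    (hKsym : ∀ i j, K i j = K j i) (f g : P2) :
    DK ν K (f * g) = DK ν K f * g + f * DK ν K g
      + (-ν) • ∑ i, ∑ j, K i j • (pderiv i f * pderiv j g) := by
  have expand : ∀ i j : Fin 2, pderiv i (pderiv j (f * g))
      = pderiv i (pderiv j f) * g + pderiv j f * pderiv i g
        + pderiv i f * pderiv j g + f * pderiv i (pderiv j g) := by
    intro i j
    rw [pderiv_mul (i := j), map_add, pderiv_mul, pderiv_mul]
    ring
  have swap : (∑ i, ∑ j, K i j • (pderiv j f * pderiv i g))
      = ∑ i, ∑ j, K i j • (pderiv i f * pderiv j g) := by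
    rw [Finset.sum_comm]
    exact Finset.sum_congr rfl fun i _ => Finset.sum_congr rfl fun j _ => by
      rw [hKsym j i]
  have h1 : (∑ i, ∑ j, K i j • pderiv i (pderiv j (f * g)))
      = (∑ i, ∑ j, K i j • (pderiv i (pderiv j f) * g))
      + (∑ i, ∑ j, K i j • (pderiv j f * pderiv i g))
      + (∑ i, ∑ j, K i j • (pderiv i f * pderiv j g))
      + (∑ i, ∑ j, K i j • (f * pderiv i (pderiv j g))) := by
    rw [← Finset.sum_add_distrib, ← Finset.sum_add_distrib, ← Finset.sum_add_distrib]
    refine Finset.sum_congr rfl fun i _ => ?_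
    rw [← Finset.sum_add_distrib, ← Finset.sum_add_distrib, ← Finset.sum_add_distrib]
    refine Finset.sum_congr rfl fun j _ => ?_
    rw [expand i j, smul_add, smul_add, smul_add]
  have hDK : ∀ p : P2, DK ν K p = (-ν / 2) • ∑ i, ∑ j, K i j • pderiv i (pderiv j p) := by
    intro p
    unfold DK
    simp only [LinearMap.smul_apply, LinearMap.coe_sum, Finset.sum_apply,
      LinearMap.comp_apply, Derivation.coeFn_coe]
  have hL : ∀ i : Fin 2, (∑ j, K i j • pderiv i (pderiv j f)) * g
      = ∑ j, K i j • (pderiv i (pderiv j f) * g) := by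
    intro i; rw [Finset.sum_mul]; exact Finset.sum_congr rfl fun j _ => smul_mul_assoc _ _ _
  have hR : ∀ i : Fin 2, f * (∑ j, K i j • pderiv i (pderiv j g))
      = ∑ j, K i j • (f * pderiv i (pderiv j g)) := by
    intro i; rw [Finset.mul_sum]; exact Finset.sum_congr rfl fun j _ => mul_smul_comm _ _ _
  rw [hDK (f * g), hDK f, hDK g, h1, swap]
  rw [smul_mul_assoc, Finset.sum_mul]
  simp only [hL]
  rw [mul_smul_comm, Finset.mul_sum]
  simp only [hR]
  rw [smul_add, smul_add, smul_add]
  match_scalars <;> ring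

end Leibniz



open MvPolynomial

/-- Iterated partial derivative along a word `i : Fin l → Fin 2`. -/
noncomputable def iterPderiv {l : ℕ} (i : Fin l → Fin 2)
    (f : MvPolynomial (Fin 2) ℂ) : MvPolynomial (Fin 2) ℂ :=
  (List.ofFn i).foldl (fun g idx => MvPolynomial.pderiv idx g) f

/-- The Moyal-type star product associated to a matrix `H` and a parameter
`ν`; on polynomials only finitely many terms of the sum over `l` are nonzero,
so the `finsum` is well defined. -/
noncomputable def starH (ν : ℂ) (H : Matrix (Fin 2) (Fin 2) ℂ)
    (f g : MvPolynomial (Fin 2) ℂ) : MvPolynomial (Fin 2) ℂ :=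
  ∑ᶠ l : ℕ, (ν ^ l / (l.factorial : ℂ)) •
    ∑ i : Fin l → Fin 2, ∑ j : Fin l → Fin 2,
      (∏ m, H (i m) (j m)) • (iterPderiv i f * iterPderiv j g)


noncomputable section Part5
open MvPolynomial TensorProduct

lemma iterPderiv_cons {l : ℕ} (a : Fin 2) (i : Fin l → Fin 2) (f : P2) :
    iterPderiv (Fin.cons a i) f = iterPderiv i (pderiv a f) := by
  unfold iterPderiv
  rw [List.ofFn_succ]
  simp only [Fin.cons_zero, Fin.cons_succ, List.foldl_cons]

lemma sum_fin_succ_words {V' : Type*} [AddCommMonoid V'] {l : ℕ}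
    (G : (Fin (l + 1) → Fin 2) → V') :
    (∑ i' : Fin (l + 1) → Fin 2, G i')
      = ∑ a : Fin 2, ∑ i : Fin l → Fin 2, G (Fin.cons a i) := by
  rw [← (Fintype.sum_equiv (Fin.consEquiv fun _ : Fin (l + 1) => Fin 2)
    (fun p => G (Fin.cons p.1 p.2)) G (fun p => rfl)), Fintype.sum_prod_type]

lemma EM_pow (M : Matrix (Fin 2) (Fin 2) ℂ) (l : ℕ) (f g : P2) :
    ((EM M) ^ l) (f ⊗ₜ[ℂ] g)
      = ∑ i : Fin l → Fin 2, ∑ j : Fin l → Fin 2,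
          (∏ m, M (i m) (j m)) • (iterPderiv i f ⊗ₜ[ℂ] iterPderiv j g) := by
  induction l generalizing f g with
  | zero =>
    simp [iterPderiv]
  | succ l ih =>
    rw [pow_succ, Module.End.mul_apply]
    have hEM : EM M (f ⊗ₜ[ℂ] g) = ∑ a, ∑ b, M a b • ((pderiv a f) ⊗ₜ[ℂ] (pderiv b g)) := by
      unfold EM
      simp only [LinearMap.coe_sum, Finset.sum_apply, LinearMap.smul_apply,
        TensorProduct.map_tmul, pd_apply]
    rw [hEM, map_sum]
    have lhs : ∀ a : Fin 2, ((EM M) ^ l) (∑ b, M a b • ((pderiv a f) ⊗ₜ[ℂ] (pderiv b g)))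
        = ∑ b, M a b • ∑ i : Fin l → Fin 2, ∑ j : Fin l → Fin 2,
            (∏ m, M (i m) (j m)) •
              (iterPderiv (Fin.cons a i) f ⊗ₜ[ℂ] iterPderiv (Fin.cons b j) g) := by
      intro a
      rw [map_sum]
      refine Finset.sum_congr rfl fun b _ => ?_
      rw [map_smul, ih]
      simp only [iterPderiv_cons]
    simp only [lhs]
    simp only [sum_fin_succ_words]
    refine Finset.sum_congr rfl fun a _ => ?_
    conv_rhs => rw [Finset.sum_comm]
    refine Finset.sum_congr rfl fun b _ => ?_
    rw [Finset.smul_sum]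
    refine Finset.sum_congr rfl fun i _ => ?_
    rw [Finset.smul_sum]
    refine Finset.sum_congr rfl fun j _ => ?_
    rw [Fin.prod_univ_succ]
    simp only [Fin.cons_zero, Fin.cons_succ, mul_smul]

/-- `starH` as a composition of the multiplication map with `expOp`. -/
lemma starH_eq_mu_expOp (ν : ℂ) (M : Matrix (Fin 2) (Fin 2) ℂ) (f g : P2) :
    starH ν M f g = LinearMap.mul' ℂ P2 (expOp (ν • EM M) (f ⊗ₜ[ℂ] g)) := by
  set d0 := f.totalDegree + g.totalDegree + 1 with hd0
  have hfg : f ⊗ₜ[ℂ] g ∈ WPP d0 := tmul_mem_WPP le_rfl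
  have hlow : Lowers WPP (ν • EM M) := (lowers_EM M).smul ν
  have hvan : ∀ n, d0 ≤ n → ((ν • EM M) ^ n) (f ⊗ₜ[ℂ] g) = 0 :=
    fun n hn => hlow.pow_eq_zero WPP_zero hfg hn
  -- the term of `starH` equals the image of the corresponding term
  have hterm : ∀ l : ℕ,
      (ν ^ l / (l.factorial : ℂ)) • ∑ i : Fin l → Fin 2, ∑ j : Fin l → Fin 2,
        (∏ m, M (i m) (j m)) • (iterPderiv i f * iterPderiv j g)
      = ((l.factorial : ℂ))⁻¹ •
          LinearMap.mul' ℂ P2 (((ν • EM M) ^ l) (f ⊗ₜ[ℂ] g)) := by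
    intro l
    rw [smul_pow, LinearMap.smul_apply, EM_pow, map_smul, map_sum]
    have : ∀ i : Fin l → Fin 2, LinearMap.mul' ℂ P2
        (∑ j : Fin l → Fin 2, (∏ m, M (i m) (j m)) • (iterPderiv i f ⊗ₜ[ℂ] iterPderiv j g))
        = ∑ j : Fin l → Fin 2, (∏ m, M (i m) (j m)) • (iterPderiv i f * iterPderiv j g) := by
      intro i
      rw [map_sum]
      exact Finset.sum_congr rfl fun j _ => by rw [map_smul, LinearMap.mul'_apply]
    simp only [this]
    rw [smul_smul, div_eq_mul_inv, mul_comm]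
  unfold starH
  simp only [hterm]
  rw [expOp_eq_sum hvan, map_sum]
  simp only [map_smul]
  refine finsum_eq_sum_of_support_subset _ fun n hn => ?_
  simp only [Function.mem_support] at hn
  by_contra hmem
  simp only [Finset.coe_range, Set.mem_Iio, not_lt] at hmem
  rw [hvan n hmem, map_zero, smul_zero] at hn
  exact hn rfl

end Part5


open MvPolynomial TensorProduct in
/-- Theorem 4.10 (Tomihisa–Yoshioka): the operator
`T = ∑ (1/l!) ((−ν/2) ∑ K i j ∂_i ∂_j)^l` built from the symmetric part `K`
of `H` is a ℂ-linear bijection with `T 1 = 1` intertwining the star product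
for `H` with the star product for the antisymmetric part `J` of `H`;
in particular `(P, *_H)` and `(P, *_J)` are isomorphic ℂ-algebras. -/
theorem stmt11 (ν : ℂ) (H J K : Matrix (Fin 2) (Fin 2) ℂ)
    (hJ : J = (2⁻¹ : ℂ) • (H - H.transpose))
    (hK : K = (2⁻¹ : ℂ) • (H + H.transpose))
    (D : Module.End ℂ (MvPolynomial (Fin 2) ℂ))
    (hD : D = (-ν / 2) • ∑ i, ∑ j, K i j •
      ((MvPolynomial.pderiv i).toLinearMap ∘ₗ (MvPolynomial.pderiv j).toLinearMap))
    (T : MvPolynomial (Fin 2) ℂ → MvPolynomial (Fin 2) ℂ)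
    (hT : T = fun f => ∑ᶠ l : ℕ, ((l.factorial : ℂ))⁻¹ • (D ^ l) f) :
    (∀ (a : ℂ) (f g : MvPolynomial (Fin 2) ℂ), T (a • f + g) = a • T f + T g) ∧
    Function.Bijective T ∧
    T 1 = 1 ∧
    (∀ f g : MvPolynomial (Fin 2) ℂ, T (starH ν H f g) = starH ν J (T f) (T g)) := by
  have hD' : D = DK ν K := hD
  subst hD'
  have hT' : T = fun f => expOp (DK ν K) f := hT
  have lowD : Lowers WP (DK ν K) := lowers_DK ν K
  have hKsym : ∀ i j, K i j = K j i := by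
    subst hK; intro i j
    simp only [Matrix.smul_apply, Matrix.add_apply, Matrix.transpose_apply]
    ring_nf
  have hHJK : H = J + K := by
    subst hJ hK
    ext i j
    simp only [Matrix.add_apply, Matrix.smul_apply, Matrix.sub_apply,
      Matrix.transpose_apply, smul_eq_mul]
    ring
  refine ⟨?_, ?_, ?_, ?_⟩
  · -- linearity
    intro a f g
    rw [hT']
    dsimp only
    have hf : f ∈ WP (max f.totalDegree g.totalDegree + 1) :=
      mem_WP_succ.mpr (le_max_left _ _)
    have hg : g ∈ WP (max f.totalDegree g.totalDegree + 1) :=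
      mem_WP_succ.mpr (le_max_right _ _)
    exact expOp_add_smul WP_zero lowD hf hg a
  · -- bijectivity
    have lowD' : Lowers WP (-(DK ν K)) := lowD.neg
    have h1 : ∀ v, expOp (DK ν K) (expOp (-(DK ν K)) v) = v := by
      intro v
      have hv : v ∈ WP (v.totalDegree + 1) := mem_WP_succ.mpr le_rfl
      rw [← expOp_add_apply WP_zero lowD lowD' (Commute.neg_right (Commute.refl (DK ν K))) hv,
        add_neg_cancel, expOp_zero_apply]
    have h2 : ∀ v, expOp (-(DK ν K)) (expOp (DK ν K) v) = v := by
      intro v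
      have hv : v ∈ WP (v.totalDegree + 1) := mem_WP_succ.mpr le_rfl
      rw [← expOp_add_apply WP_zero lowD' lowD (Commute.neg_left (Commute.refl (DK ν K))) hv,
        neg_add_cancel, expOp_zero_apply]
    rw [hT']
    exact Function.bijective_iff_has_inverse.mpr
      ⟨fun v => expOp (-(DK ν K)) v, fun v => h2 v, fun v => h1 v⟩
  · -- T 1 = 1
    rw [hT']
    dsimp only
    have hvan : ∀ n, 1 ≤ n → ((DK ν K) ^ n) (1 : P2) = 0 := fun n hn =>
      lowD.pow_eq_zero WP_zero (mem_WP_succ.mpr (by simp)) hn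
    rw [expOp_eq_sum hvan]
    simp
  · -- the intertwining property
    intro f g
    set μ := LinearMap.mul' ℂ P2 with hμ
    set LL := LinearMap.rTensor P2 (DK ν K) + LinearMap.lTensor P2 (DK ν K)
      + (-ν) • EM K with hLL
    have lowLL : Lowers WPP LL :=
      ((lowers_rT ν K).add (lowers_lT ν K)).add ((lowers_EM K).smul (-ν))
    -- conjugation identity
    have hconj : ∀ x : PP, (DK ν K) (μ x) = μ (LL x) := by
      have : ((DK ν K) ∘ₗ μ) = (μ ∘ₗ LL) := by
        refine TensorProduct.ext' fun u v => ?_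
        simp only [LinearMap.comp_apply, hμ, LinearMap.mul'_apply]
        have hEMt : EM K (u ⊗ₜ[ℂ] v) = ∑ i, ∑ j, K i j • ((pderiv i u) ⊗ₜ[ℂ] (pderiv j v)) := by
          unfold EM
          simp only [LinearMap.coe_sum, Finset.sum_apply, LinearMap.smul_apply,
            TensorProduct.map_tmul, pd_apply]
        rw [hLL]
        simp only [LinearMap.add_apply, LinearMap.smul_apply, LinearMap.rTensor_tmul,
          LinearMap.lTensor_tmul, hEMt, map_add, map_smul, map_sum, LinearMap.mul'_apply]
        rw [DK_mul ν K hKsym u v]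
      exact fun x => LinearMap.congr_fun this x
    have hpow : ∀ (n : ℕ) (x : PP), ((DK ν K) ^ n) (μ x) = μ ((LL ^ n) x) := by
      intro n
      induction n with
      | zero => intro x; simp
      | succ n ihn =>
        intro x
        rw [pow_succ', pow_succ', Module.End.mul_apply, Module.End.mul_apply, ihn x, hconj]
    have hexp_mu : ∀ (x : PP) (d' : ℕ), x ∈ WPP d' → expOp (DK ν K) (μ x) = μ (expOp LL x) := by
      intro x d' hx
      have hLLn : ∀ n, d' ≤ n → (LL ^ n) x = 0 := fun n hn =>
        lowLL.pow_eq_zero WPP_zero hx hn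
      have hDn : ∀ n, d' ≤ n → ((DK ν K) ^ n) (μ x) = 0 := fun n hn => by
        rw [hpow n x, hLLn n hn, map_zero]
      rw [expOp_eq_sum hDn, expOp_eq_sum hLLn, map_sum]
      exact Finset.sum_congr rfl fun l _ => by rw [map_smul, hpow]
    -- memberships
    set d0 := f.totalDegree + g.totalDegree + 1 with hd0
    have hfg : f ⊗ₜ[ℂ] g ∈ WPP d0 := tmul_mem_WPP le_rfl
    have lowEMH : Lowers WPP (ν • EM H) := (lowers_EM H).smul ν
    have hfgH : expOp (ν • EM H) (f ⊗ₜ[ℂ] g) ∈ WPP d0 :=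
      expOp_mem WPP_zero WPP_mono lowEMH hfg
    -- commutation facts
    have commLL_EMH : Commute LL (ν • EM H) := by
      refine Commute.smul_right ?_ ν
      exact ((commRT_EM ν K H).add_left (commLT_EM ν K H)).add_left
        ((commEM_EM K H).smul_left (-ν))
    -- operator identity  LL + ν • EM H = ν • EM J + (rT + lT)
    have hopid : LL + ν • EM H
        = ν • EM J + (LinearMap.rTensor P2 (DK ν K) + LinearMap.lTensor P2 (DK ν K)) := by
      rw [hLL, hHJK, EM_add]
      module
    have commEMJ_RL : Commute (ν • EM J)
        (LinearMap.rTensor P2 (DK ν K) + LinearMap.lTensor P2 (DK ν K)) := by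
      refine Commute.smul_left ?_ ν
      exact ((commRT_EM ν K J).symm.add_right (commLT_EM ν K J).symm)
    have lowRL : Lowers WPP
        (LinearMap.rTensor P2 (DK ν K) + LinearMap.lTensor P2 (DK ν K)) :=
      (lowers_rT ν K).add (lowers_lT ν K)
    -- splitting of the tensor exponential
    have hsplit : expOp (LinearMap.rTensor P2 (DK ν K) + LinearMap.lTensor P2 (DK ν K))
        (f ⊗ₜ[ℂ] g) = (expOp (DK ν K) f) ⊗ₜ[ℂ] (expOp (DK ν K) g) := by
      rw [expOp_add_apply WPP_zero (lowers_rT ν K) (lowers_lT ν K) (commRT_LT ν K) hfg]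
      have hlt : expOp (LinearMap.lTensor P2 (DK ν K)) (f ⊗ₜ[ℂ] g)
          = f ⊗ₜ[ℂ] expOp (DK ν K) g := by
        have hvg : ∀ n, g.totalDegree + 1 ≤ n → ((DK ν K) ^ n) g = 0 := fun n hn =>
          (lowers_DK ν K).pow_eq_zero WP_zero (mem_WP_succ.mpr le_rfl) hn
        have hv : ∀ n, g.totalDegree + 1 ≤ n →
            ((LinearMap.lTensor P2 (DK ν K)) ^ n) (f ⊗ₜ[ℂ] g) = 0 := by
          intro n hn
          rw [LinearMap.lTensor_pow, LinearMap.lTensor_tmul, hvg n hn,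
            TensorProduct.tmul_zero]
        rw [expOp_eq_sum hv, expOp_eq_sum hvg, TensorProduct.tmul_sum]
        refine Finset.sum_congr rfl fun l _ => ?_
        rw [LinearMap.lTensor_pow, LinearMap.lTensor_tmul, TensorProduct.tmul_smul]
      rw [hlt]
      have hvf : ∀ n, f.totalDegree + 1 ≤ n → ((DK ν K) ^ n) f = 0 := fun n hn =>
        (lowers_DK ν K).pow_eq_zero WP_zero (mem_WP_succ.mpr le_rfl) hn
      have hv : ∀ n, f.totalDegree + 1 ≤ n →
          ((LinearMap.rTensor P2 (DK ν K)) ^ n) (f ⊗ₜ[ℂ] expOp (DK ν K) g) = 0 := by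
        intro n hn
        rw [LinearMap.rTensor_pow, LinearMap.rTensor_tmul, hvf n hn,
          TensorProduct.zero_tmul]
      rw [expOp_eq_sum hv, expOp_eq_sum hvf, TensorProduct.sum_tmul]
      refine Finset.sum_congr rfl fun l _ => ?_
      rw [LinearMap.rTensor_pow, LinearMap.rTensor_tmul, TensorProduct.smul_tmul']
    -- the final computation
    calc T (starH ν H f g)
        = expOp (DK ν K) (μ (expOp (ν • EM H) (f ⊗ₜ[ℂ] g))) := by
          rw [hT', starH_eq_mu_expOp]
      _ = μ (expOp LL (expOp (ν • EM H) (f ⊗ₜ[ℂ] g))) := hexp_mu _ d0 hfgH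
      _ = μ (expOp (LL + ν • EM H) (f ⊗ₜ[ℂ] g)) := by
          rw [← expOp_add_apply WPP_zero lowLL lowEMH commLL_EMH hfg]
      _ = μ (expOp (ν • EM J)
            (expOp (LinearMap.rTensor P2 (DK ν K) + LinearMap.lTensor P2 (DK ν K))
              (f ⊗ₜ[ℂ] g))) := by
          rw [hopid, expOp_add_apply WPP_zero ((lowers_EM J).smul ν) lowRL commEMJ_RL hfg]
      _ = μ (expOp (ν • EM J) ((T f) ⊗ₜ[ℂ] (T g))) := by
          rw [hsplit, hT']
      _ = starH ν J (T f) (T g) := (starH_eq_mu_expOp ν J (T f) (T g)).symm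
end

section
/- Let M be an associative ℂ-algebra, let d ≥ 1, let e : Fin d → M, let ħ ∈ ℂ, and let c : Fin d → Fin d → Fin d → ℂ be such that ⁅e i, e j⁆ = ħ • Σ_k (c i j k) • (e k) for all i, j. For a word I = (i₁, …, i_k) ∈ (Fin d)^k with k ≥ 1, let e_(I) := (1/k!) Σ_{σ ∈ S_k} e_{i_{σ(1)}} ⋯ e_{i_{σ(k)}} denote the symmetrized product. Then for all words I of length k ≥ 1 and J of length l ≥ 1 there exists an element v in the ℂ-linear span of { e_(L) : L a word in Fin d of length between 1 and k + l − 2 } (with v = 0 when k = l = 1) such that ⁅e_(I), e_(J)⁆ = ħ • Σ_{n=1}^{k} Σ_{m=1}^{l} Σ_{p} (c (i_n) (j_m) p) • e_( (I with i_n removed) ++ (J with j_m removed) ++ (p) ) + ħ² • v. -/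
set_option linter.unusedSectionVars false
set_option linter.unusedVariables false
set_option maxHeartbeats 1000000

open List Submodule

/-- The symmetrized product `e_(I) = (1/k!) ∑_{σ ∈ S_k} e_{I(σ 1)} ⋯ e_{I(σ k)}`
of the elements of an associative ℂ-algebra indexed by a word `I`. -/
noncomputable def symProd {M : Type*} [Ring M] [Algebra ℂ M] {d : ℕ}
    (e : Fin d → M) {k : ℕ} (I : Fin k → Fin d) : M :=
  ((k.factorial : ℂ))⁻¹ •
    ∑ σ : Equiv.Perm (Fin k), (List.ofFn fun m => e (I (σ m))).prod


section Infra
variable {M : Type*} [Ring M] [Algebra ℂ M] {d : ℕ} (e : Fin d → M)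

def prodE (l : List (Fin d)) : M := (l.map e).prod

@[simp] lemma prodE_nil : prodE e ([] : List (Fin d)) = 1 := rfl
@[simp] lemma prodE_cons (i : Fin d) (l : List (Fin d)) :
    prodE e (i :: l) = e i * prodE e l := by simp [prodE]
lemma prodE_append (l₁ l₂ : List (Fin d)) :
    prodE e (l₁ ++ l₂) = prodE e l₁ * prodE e l₂ := by simp [prodE]
@[simp] lemma prodE_singleton (i : Fin d) : prodE e [i] = e i := by simp [prodE]

def Pspan (n : ℕ) : Submodule ℂ M :=
  span ℂ {x | ∃ l : List (Fin d), l ≠ [] ∧ l.length ≤ n ∧ x = prodE e l}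

lemma Pspan_mono {n m : ℕ} (h : n ≤ m) : Pspan e n ≤ Pspan e m :=
  span_mono (fun x ⟨l, h1, h2, h3⟩ => ⟨l, h1, h2.trans h, h3⟩)

lemma mem_Pspan {l : List (Fin d)} (h1 : l ≠ []) {n : ℕ} (h2 : l.length ≤ n) :
    prodE e l ∈ Pspan e n := subset_span ⟨l, h1, h2, rfl⟩

lemma Pspan_zero {x : M} (h : x ∈ Pspan e 0) : x = 0 := by
  have : Pspan e 0 = ⊥ := by
    rw [Pspan, show {x : M | ∃ l : List (Fin d), l ≠ [] ∧ l.length ≤ 0 ∧ x = prodE e l} = ∅ by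
      ext x; simp, span_empty]
  rw [this] at h; simpa using h

lemma mul_left_mem {x : M} {n : ℕ} (hx : x ∈ Pspan e n) (l : List (Fin d)) :
    prodE e l * x ∈ Pspan e (l.length + n) := by
  induction hx using span_induction with
  | mem y hy =>
    obtain ⟨w, h1, h2, rfl⟩ := hy
    rw [← prodE_append]
    exact mem_Pspan e (by simp [h1]) (by simp; omega)
  | zero => simp
  | add y z _ _ hy hz => rw [mul_add]; exact add_mem hy hz
  | smul a y _ hy => rw [mul_smul_comm]; exact smul_mem _ a hy

lemma mul_right_mem {x : M} {n : ℕ} (hx : x ∈ Pspan e n) (l : List (Fin d)) :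
    x * prodE e l ∈ Pspan e (n + l.length) := by
  induction hx using span_induction with
  | mem y hy =>
    obtain ⟨w, h1, h2, rfl⟩ := hy
    rw [← prodE_append]
    exact mem_Pspan e (by simp [h1]) (by simp; omega)
  | zero => simp
  | add y z _ _ hy hz => rw [add_mul]; exact add_mem hy hz
  | smul a y _ hy => rw [smul_mul_assoc]; exact smul_mem _ a hy

lemma mul_mem_P {x y : M} {n m : ℕ} (hx : x ∈ Pspan e n) (hy : y ∈ Pspan e m) :
    x * y ∈ Pspan e (n + m) := by
  induction hx using span_induction with
  | mem z hz => obtain ⟨w, h1, h2, rfl⟩ := hz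
                exact Pspan_mono e (by omega) (mul_left_mem e hy w)
  | zero => simp
  | add a b _ _ ha hb => rw [add_mul]; exact add_mem ha hb
  | smul a z _ hz => rw [smul_mul_assoc]; exact smul_mem _ a hz

end Infra

section Comm
variable {M : Type*} [Ring M] [Algebra ℂ M] {d : ℕ} (e : Fin d → M) (hbar : ℂ)
  (c : Fin d → Fin d → Fin d → ℂ)
  (hcomm : ∀ i j, e i * e j - e j * e i = hbar • ∑ k, c i j k • e k)

include hcomm in
lemma perm_prodE {l₁ l₂ : List (Fin d)} (h : l₁ ~ l₂) :
    ∃ v ∈ Pspan e (l₁.length - 1), prodE e l₁ = prodE e l₂ + hbar • v := by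
  induction h with
  | nil => exact ⟨0, zero_mem _, by simp⟩
  | @cons x t₁ t₂ h ih =>
    obtain ⟨v, hv, heq⟩ := ih
    rcases Nat.eq_zero_or_pos t₁.length with h0 | h0
    · have hv0 : v = 0 := Pspan_zero e (by rw [h0] at hv; exact hv)
      exact ⟨0, zero_mem _, by simp [heq, hv0]⟩
    · refine ⟨e x * v, ?_, ?_⟩
      · refine Pspan_mono e (show 1 + (t₁.length - 1) ≤ (x :: t₁).length - 1 by simp; omega) ?_
        simpa using mul_left_mem e hv [x]
      · simp [heq, mul_add, mul_smul_comm]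
  | swap x y t =>
    refine ⟨∑ p, c y x p • prodE e (p :: t), ?_, ?_⟩
    · exact sum_mem fun p _ =>
        smul_mem _ _ (mem_Pspan e (cons_ne_nil _ _) (by simp))
    · have h := hcomm y x
      have expand : prodE e (y :: x :: t)
          = (e y * e x - e x * e y) * prodE e t + prodE e (x :: y :: t) := by
        simp only [prodE_cons]; noncomm_ring
      rw [expand, h, smul_mul_assoc, Finset.sum_mul]
      simp only [smul_mul_assoc, prodE_cons]
      rw [add_comm]
  | trans h₁ h₂ ih₁ ih₂ =>
    rename_i l₁ l₂ l₃ 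
    obtain ⟨v₁, hv₁, he₁⟩ := ih₁
    obtain ⟨v₂, hv₂, he₂⟩ := ih₂
    refine ⟨v₁ + v₂, add_mem hv₁ (by rw [h₁.length_eq]; exact hv₂), ?_⟩
    rw [he₁, he₂, smul_add]; abel
end Comm

section SymA
variable {M : Type*} [Ring M] [Algebra ℂ M] {d : ℕ} (e : Fin d → M) (hbar : ℂ)
  (c : Fin d → Fin d → Fin d → ℂ)
  (hcomm : ∀ i j, e i * e j - e j * e i = hbar • ∑ k, c i j k • e k)

noncomputable def symProdL (l : List (Fin d)) : M := symProd e l.get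

lemma symProd_cast {m k : ℕ} (h : m = k) (L : Fin k → Fin d) :
    symProd e (fun i => L (Fin.cast h i)) = symProd e L := by
  subst h; rfl

lemma symProd_eq_symProdL {k : ℕ} (L : Fin k → Fin d) :
    symProd e L = symProdL e (List.ofFn L) := by
  rw [symProdL]
  rw [show (List.ofFn L).get = fun i => L (Fin.cast (List.length_ofFn (f := L)) i) from
    funext fun i => List.get_ofFn L i]
  exact (symProd_cast e _ L).symm

include hcomm in
lemma prodE_symProd (l : List (Fin d)) :
    ∃ v ∈ Pspan e (l.length - 1), prodE e l = symProdL e l + hbar • v := by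
  classical
  have key : ∀ σ : Equiv.Perm (Fin l.length),
      ∃ v, v ∈ Pspan e (l.length - 1) ∧
        (List.ofFn fun m => e (l.get (σ m))).prod = prodE e l + hbar • v := by
    intro σ
    have hperm : List.ofFn (l.get ∘ σ) ~ l := by
      have := Equiv.Perm.ofFn_comp_perm σ l.get
      rwa [List.ofFn_get] at this
    obtain ⟨v, hv, heq⟩ := perm_prodE e hbar c hcomm hperm
    refine ⟨v, by simpa using hv, ?_⟩
    have hm : (List.ofFn fun m => e (l.get (σ m))) = (List.ofFn (l.get ∘ σ)).map e := by
      rw [List.map_ofFn]; rfl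
    rw [hm]; exact heq
  choose v hv heq using key
  refine ⟨-((l.length.factorial : ℂ)⁻¹ • ∑ σ : Equiv.Perm (Fin l.length), v σ),
    neg_mem (smul_mem _ _ (sum_mem fun σ _ => hv σ)), ?_⟩
  have hfact : ((l.length.factorial : ℂ)) ≠ 0 :=
    Nat.cast_ne_zero.mpr l.length.factorial_ne_zero
  have hmain : symProdL e l
      = prodE e l + hbar • ((l.length.factorial : ℂ)⁻¹ • ∑ σ, v σ) := by
    rw [symProdL, symProd]
    rw [Finset.sum_congr rfl fun σ _ => heq σ]
    rw [Finset.sum_add_distrib, Finset.sum_const, ← Finset.smul_sum]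
    rw [smul_add]
    congr 1
    · rw [Finset.card_univ, Fintype.card_perm, Fintype.card_fin]
      rw [← Nat.cast_smul_eq_nsmul ℂ]
      rw [smul_smul, inv_mul_cancel₀ hfact, one_smul]
    · rw [smul_comm]
  rw [hmain, smul_neg, add_neg_cancel_right]

def Sspan (n : ℕ) : Submodule ℂ M :=
  span ℂ {x : M | ∃ m : ℕ, 1 ≤ m ∧ m ≤ n ∧ ∃ L : Fin m → Fin d, x = symProd e L}

lemma symProdL_mem_S {l : List (Fin d)} (h1 : l ≠ []) {n : ℕ} (h2 : l.length ≤ n) :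
    symProdL e l ∈ Sspan e n :=
  subset_span ⟨l.length, List.length_pos_iff.mpr h1,
    h2, l.get, rfl⟩

include hcomm in
lemma prodE_mem_S : ∀ (b : ℕ) (l : List (Fin d)), l.length ≤ b → l ≠ [] →
    ∀ {n : ℕ}, l.length ≤ n → prodE e l ∈ Sspan e n := by
  intro b
  induction b with
  | zero => intro l hb hne _ _; exact absurd (List.length_pos_iff.mpr hne) (by omega)
  | succ b ih =>
    intro l hb hne n hn
    obtain ⟨v, hv, heq⟩ := prodE_symProd e hbar c hcomm l
    rw [heq]
    refine add_mem (symProdL_mem_S e hne hn) (smul_mem _ _ ?_)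
    have hle : Pspan e (l.length - 1) ≤ Sspan e n := by
      rw [Pspan, span_le]
      rintro x ⟨w, hw1, hw2, rfl⟩
      have hlp := List.length_pos_iff.mpr hne
      exact ih w (by omega) hw1 (by omega)
    exact hle hv

include hcomm in
lemma Pspan_le_Sspan {n m : ℕ} (h : n ≤ m) : Pspan e n ≤ Sspan e m := by
  rw [Pspan, span_le]
  rintro x ⟨w, hw1, hw2, rfl⟩
  exact prodE_mem_S e hbar c hcomm n w hw2 hw1 (by omega)

end SymA

section CommE
variable {M : Type*} [Ring M] [Algebra ℂ M] {d : ℕ} (e : Fin d → M) (hbar : ℂ)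
  (c : Fin d → Fin d → Fin d → ℂ)
  (hcomm : ∀ i j, e i * e j - e j * e i = hbar • ∑ k, c i j k • e k)

include hcomm in
lemma comm_single (i : Fin d) (q : List (Fin d)) :
    ∃ v ∈ Pspan e (q.length - 1),
      e i * prodE e q - prodE e q * e i
        = hbar • (∑ m : Fin q.length, ∑ p, c i (q.get m) p • prodE e (q.eraseIdx ↑m ++ [p]))
          + hbar ^ 2 • v := by
  induction q with
  | nil => exact ⟨0, zero_mem _, by simp⟩
  | cons x t ih =>
    obtain ⟨v, hv, heq⟩ := ih
    have hperm : ∀ p : Fin d, ∃ w ∈ Pspan e t.length,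
        prodE e (p :: t) = prodE e (t ++ [p]) + hbar • w := by
      intro p
      obtain ⟨w, hw, hweq⟩ :=
        perm_prodE e hbar c hcomm (List.perm_append_singleton p t).symm
      exact ⟨w, by simpa using hw, hweq⟩
    choose w hw hweq using hperm
    have hexv : e x * v ∈ Pspan e ((x :: t).length - 1) := by
      rcases Nat.eq_zero_or_pos t.length with h0 | h0
      · have hv0 : v = 0 := Pspan_zero e (by rw [h0] at hv; exact hv)
        rw [hv0, mul_zero]; exact zero_mem _
      · refine Pspan_mono e (show 1 + (t.length - 1) ≤ (x :: t).length - 1 by simp; omega) ?_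
        simpa using mul_left_mem e hv [x]
    refine ⟨∑ p, c i x p • w p + e x * v,
      add_mem (sum_mem fun p _ => smul_mem _ _ (Pspan_mono e (by simp) (hw p))) hexv, ?_⟩
    have decomp : e i * prodE e (x :: t) - prodE e (x :: t) * e i
        = (e i * e x - e x * e i) * prodE e t
          + e x * (e i * prodE e t - prodE e t * e i) := by
      simp only [prodE_cons]; noncomm_ring
    have hsplit : (∑ m : Fin (x :: t).length, ∑ p,
          c i ((x :: t).get m) p • prodE e ((x :: t).eraseIdx ↑m ++ [p]))
        = (∑ p, c i x p • prodE e (t ++ [p]))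
          + ∑ m : Fin t.length, ∑ p,
              c i (t.get m) p • prodE e ((x :: t.eraseIdx ↑m) ++ [p]) :=
      Fin.sum_univ_succ _
    have key1 : (hbar • ∑ p, c i x p • e p) * prodE e t
        = hbar • (∑ p, c i x p • prodE e (t ++ [p]))
          + (hbar * hbar) • ∑ p, c i x p • w p := by
      calc (hbar • ∑ p, c i x p • e p) * prodE e t
          = hbar • ∑ p, c i x p • (e p * prodE e t) := by
            rw [smul_mul_assoc, Finset.sum_mul]; simp only [smul_mul_assoc]
        _ = hbar • ∑ p, (c i x p • prodE e (t ++ [p]) + hbar • (c i x p • w p)) := by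
            congr 1; refine Finset.sum_congr rfl fun p _ => ?_
            rw [← prodE_cons, hweq p, smul_add, smul_comm]
        _ = hbar • (∑ p, c i x p • prodE e (t ++ [p]))
              + (hbar * hbar) • ∑ p, c i x p • w p := by
            rw [Finset.sum_add_distrib, smul_add, ← Finset.smul_sum, smul_smul]
    have key3 : e x * (∑ m : Fin t.length, ∑ p,
          c i (t.get m) p • prodE e (t.eraseIdx ↑m ++ [p]))
        = ∑ m : Fin t.length, ∑ p,
            c i (t.get m) p • prodE e ((x :: t.eraseIdx ↑m) ++ [p]) := by
      rw [Finset.mul_sum]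
      refine Finset.sum_congr rfl fun m _ => ?_
      rw [Finset.mul_sum]
      refine Finset.sum_congr rfl fun p _ => ?_
      rw [mul_smul_comm, cons_append, prodE_cons]
    rw [decomp, hcomm i x, heq, key1, mul_add, mul_smul_comm, mul_smul_comm, key3,
      hsplit, smul_add, smul_add, pow_two]
    abel
end CommE

section CommD
variable {M : Type*} [Ring M] [Algebra ℂ M] {d : ℕ} (e : Fin d → M) (hbar : ℂ)
  (c : Fin d → Fin d → Fin d → ℂ)
  (hcomm : ∀ i j, e i * e j - e j * e i = hbar • ∑ k, c i j k • e k)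

include hcomm in
lemma comm_prod (P q : List (Fin d)) (hP : P ≠ []) (hq : q ≠ []) :
    ∃ v ∈ Pspan e (P.length + q.length - 2),
      prodE e P * prodE e q - prodE e q * prodE e P
        = hbar • (∑ n : Fin P.length, ∑ m : Fin q.length, ∑ p,
            c (P.get n) (q.get m) p • prodE e ((P.eraseIdx ↑n ++ q.eraseIdx ↑m) ++ [p]))
          + hbar ^ 2 • v := by
  have hq1 : 1 ≤ q.length := List.length_pos_iff.mpr hq
  induction P with
  | nil => exact absurd rfl hP
  | cons x t ih =>
    rcases eq_or_ne t [] with rfl | ht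
    · -- singleton case
      obtain ⟨v, hv, heq⟩ := comm_single e hbar c hcomm x q
      refine ⟨v, by rwa [show ([x] : List (Fin d)).length + q.length - 2 = q.length - 1
        by simp; omega], ?_⟩
      have hsum : (∑ n : Fin ([x] : List (Fin d)).length, ∑ m : Fin q.length, ∑ p,
            c (([x] : List (Fin d)).get n) (q.get m) p •
              prodE e ((([x] : List (Fin d)).eraseIdx ↑n ++ q.eraseIdx ↑m) ++ [p]))
          = ∑ m : Fin q.length, ∑ p,
              c x (q.get m) p • prodE e (q.eraseIdx ↑m ++ [p]) := Fin.sum_univ_one _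
      rw [hsum]
      simpa using heq
    · obtain ⟨v₁, hv₁, heq₁⟩ := ih ht
      obtain ⟨v₂, hv₂, heq₂⟩ := comm_single e hbar c hcomm x q
      have ht1 : 1 ≤ t.length := List.length_pos_iff.mpr ht
      have hperm : ∀ (m : Fin q.length) (p : Fin d), ∃ w ∈ Pspan e (t.length + q.length - 1),
          prodE e ((q.eraseIdx ↑m ++ [p]) ++ t)
            = prodE e ((t ++ q.eraseIdx ↑m) ++ [p]) + hbar • w := by
        intro m p
        have hp : ((q.eraseIdx ↑m ++ [p]) ++ t) ~ ((t ++ q.eraseIdx ↑m) ++ [p]) := by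
          rw [List.append_assoc t]
          exact List.perm_append_comm
        obtain ⟨w, hw, hweq⟩ := perm_prodE e hbar c hcomm hp
        refine ⟨w, ?_, hweq⟩
        refine Pspan_mono e ?_ hw
        have hm : (↑m : ℕ) < q.length := m.isLt
        simp [List.length_eraseIdx, hm]
        omega
      choose w hw hweq using hperm
      refine ⟨(∑ m : Fin q.length, ∑ p, c x (q.get m) p • w m p)
          + v₂ * prodE e t + e x * v₁, ?_, ?_⟩
      · refine add_mem (add_mem ?_ ?_) ?_
        · refine sum_mem fun m _ => sum_mem fun p _ => smul_mem _ _ ?_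
          exact Pspan_mono e (by simp; omega) (hw m p)
        · refine Pspan_mono e (show q.length - 1 + t.length ≤ _ by simp; omega)
            (mul_right_mem e hv₂ t)
        · refine Pspan_mono e (show 1 + (t.length + q.length - 2) ≤ _ by simp; omega) ?_
          simpa using mul_left_mem e hv₁ [x]
      · have decomp : prodE e (x :: t) * prodE e q - prodE e q * prodE e (x :: t)
            = e x * (prodE e t * prodE e q - prodE e q * prodE e t)
              + (e x * prodE e q - prodE e q * e x) * prodE e t := by
          simp only [prodE_cons]; noncomm_ring
        have hsplit : (∑ n : Fin (x :: t).length, ∑ m : Fin q.length, ∑ p,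
              c ((x :: t).get n) (q.get m) p •
                prodE e (((x :: t).eraseIdx ↑n ++ q.eraseIdx ↑m) ++ [p]))
            = (∑ m : Fin q.length, ∑ p,
                c x (q.get m) p • prodE e ((t ++ q.eraseIdx ↑m) ++ [p]))
              + ∑ n : Fin t.length, ∑ m : Fin q.length, ∑ p,
                  c (t.get n) (q.get m) p •
                    prodE e ((x :: (t.eraseIdx ↑n ++ q.eraseIdx ↑m)) ++ [p]) :=
          Fin.sum_univ_succ _
        have key1 : e x * (prodE e t * prodE e q - prodE e q * prodE e t)
            = hbar • (∑ n : Fin t.length, ∑ m : Fin q.length, ∑ p,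
                c (t.get n) (q.get m) p •
                  prodE e ((x :: (t.eraseIdx ↑n ++ q.eraseIdx ↑m)) ++ [p]))
              + hbar ^ 2 • (e x * v₁) := by
          rw [heq₁, mul_add, mul_smul_comm, mul_smul_comm]
          congr 1
          congr 1
          rw [Finset.mul_sum]
          refine Finset.sum_congr rfl fun n _ => ?_
          rw [Finset.mul_sum]
          refine Finset.sum_congr rfl fun m _ => ?_
          rw [Finset.mul_sum]
          refine Finset.sum_congr rfl fun p _ => ?_
          rw [mul_smul_comm, cons_append, prodE_cons]
        have key2 : (e x * prodE e q - prodE e q * e x) * prodE e t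
            = hbar • (∑ m : Fin q.length, ∑ p,
                c x (q.get m) p • prodE e ((t ++ q.eraseIdx ↑m) ++ [p]))
              + (hbar * hbar) • (∑ m : Fin q.length, ∑ p, c x (q.get m) p • w m p)
              + hbar ^ 2 • (v₂ * prodE e t) := by
          rw [heq₂, add_mul, smul_mul_assoc, smul_mul_assoc]
          congr 1
          rw [Finset.sum_mul]
          have : ∀ m : Fin q.length, (∑ p, c x (q.get m) p •
                prodE e (q.eraseIdx ↑m ++ [p])) * prodE e t
              = (∑ p, c x (q.get m) p • prodE e ((t ++ q.eraseIdx ↑m) ++ [p]))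
                + hbar • ∑ p, c x (q.get m) p • w m p := by
            intro m
            rw [Finset.sum_mul]
            have : ∀ p : Fin d, (c x (q.get m) p • prodE e (q.eraseIdx ↑m ++ [p])) * prodE e t
                = c x (q.get m) p • prodE e ((t ++ q.eraseIdx ↑m) ++ [p])
                  + hbar • (c x (q.get m) p • w m p) := by
              intro p
              rw [smul_mul_assoc, ← prodE_append, hweq m p, smul_add, smul_comm]
            rw [Finset.sum_congr rfl fun p _ => this p, Finset.sum_add_distrib,
              ← Finset.smul_sum]
          rw [Finset.sum_congr rfl fun m _ => this m, Finset.sum_add_distrib,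
            ← Finset.smul_sum, smul_add, smul_smul]
        rw [decomp, key1, key2, hsplit, smul_add, smul_add, smul_add, pow_two]
        abel
end CommD

lemma ofFn_removeNth' {α : Type*} : ∀ {n : ℕ} (f : Fin (n + 1) → α) (i : Fin (n + 1)),
    List.ofFn (i.removeNth f) = (List.ofFn f).eraseIdx ↑i := by
  intro n
  induction n with
  | zero =>
    intro f i
    have hi : i = 0 := Fin.ext (by omega)
    subst hi
    simp [Fin.removeNth]
  | succ n ih =>
    intro f i
    induction i using Fin.cases with
    | zero =>
      simp [Fin.removeNth, List.ofFn_succ]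
      exact ⟨rfl, rfl⟩
    | succ i =>
      rw [List.ofFn_succ (f := f)]
      rw [List.ofFn_succ]
      rw [Fin.val_succ, List.eraseIdx_cons_succ, ← ih (fun j => f j.succ) i]
      congr 1
      · congr 1
        funext j
        show f ((i.succ).succAbove j.succ) = (fun j => f j.succ) (i.succAbove j)
        rw [Fin.succ_succAbove_succ]

section CommF
variable {M : Type*} [Ring M] [Algebra ℂ M] {d : ℕ} (e : Fin d → M) (hbar : ℂ)
  (c : Fin d → Fin d → Fin d → ℂ)
  (hcomm : ∀ i j, e i * e j - e j * e i = hbar • ∑ k, c i j k • e k)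

include hcomm in
lemma comm_gen_span {n m : ℕ} {x : M} (hx : x ∈ Pspan e n) {l : List (Fin d)}
    (hl : l ≠ []) (hlm : l.length ≤ m) :
    ∃ z ∈ Pspan e (n + m - 1), x * prodE e l - prodE e l * x = hbar • z := by
  induction hx using span_induction with
  | mem y hy =>
    obtain ⟨P, hP1, hP2, rfl⟩ := hy
    obtain ⟨v, hv, heq⟩ := comm_prod e hbar c hcomm P l hP1 hl
    have hPl : 1 ≤ P.length := List.length_pos_iff.mpr hP1
    have hll : 1 ≤ l.length := List.length_pos_iff.mpr hl
    refine ⟨(∑ a : Fin P.length, ∑ b : Fin l.length, ∑ p,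
        c (P.get a) (l.get b) p • prodE e ((P.eraseIdx ↑a ++ l.eraseIdx ↑b) ++ [p]))
        + hbar • v, ?_, ?_⟩
    · refine add_mem (sum_mem fun a _ => sum_mem fun b _ => sum_mem fun p _ =>
        smul_mem _ _ (mem_Pspan e (by simp) ?_)) (smul_mem _ _ (Pspan_mono e (by omega) hv))
      have ha : (↑a : ℕ) < P.length := a.isLt
      have hb : (↑b : ℕ) < l.length := b.isLt
      simp [List.length_eraseIdx, ha, hb]
      omega
    · rw [heq, smul_add, pow_two, smul_smul]
  | zero => exact ⟨0, zero_mem _, by simp⟩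
  | add y z _ _ hy hz =>
    obtain ⟨z₁, hz₁, he₁⟩ := hy
    obtain ⟨z₂, hz₂, he₂⟩ := hz
    refine ⟨z₁ + z₂, add_mem hz₁ hz₂, ?_⟩
    rw [add_mul, mul_add, smul_add, ← he₁, ← he₂]
    abel
  | smul a y _ hy =>
    obtain ⟨z, hz, he⟩ := hy
    refine ⟨a • z, smul_mem _ _ hz, ?_⟩
    rw [smul_mul_assoc, mul_smul_comm, ← smul_sub, he, smul_comm]

include hcomm in
lemma comm_span_span {n m : ℕ} {x y : M} (hx : x ∈ Pspan e n) (hy : y ∈ Pspan e m) :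
    ∃ z ∈ Pspan e (n + m - 1), x * y - y * x = hbar • z := by
  induction hy using span_induction with
  | mem w hw =>
    obtain ⟨l, hl1, hl2, rfl⟩ := hw
    exact comm_gen_span e hbar c hcomm hx hl1 hl2
  | zero => exact ⟨0, zero_mem _, by simp⟩
  | add y z _ _ hy hz =>
    obtain ⟨z₁, hz₁, he₁⟩ := hy
    obtain ⟨z₂, hz₂, he₂⟩ := hz
    refine ⟨z₁ + z₂, add_mem hz₁ hz₂, ?_⟩
    rw [mul_add, add_mul, smul_add, ← he₁, ← he₂]
    abel
  | smul a y _ hy =>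
    obtain ⟨z, hz, he⟩ := hy
    refine ⟨a • z, smul_mem _ _ hz, ?_⟩
    rw [mul_smul_comm, smul_mul_assoc, ← smul_sub, he, smul_comm]
end CommF

/-- Key computation in the proof of Theorem 6.2: the commutator of two
symmetrized products equals `ħ` times the symmetrized image of the Poisson
bracket plus a correction of order `ħ²` lying in the span of shorter
symmetrized products. -/
theorem stmt14 {M : Type*} [Ring M] [Algebra ℂ M]
    (d : ℕ) (hd : 1 ≤ d) (e : Fin d → M) (hbar : ℂ)
    (c : Fin d → Fin d → Fin d → ℂ)
    (hcomm : ∀ i j, e i * e j - e j * e i = hbar • ∑ k, c i j k • e k)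
    (k' l' : ℕ) (I : Fin (k' + 1) → Fin d) (J : Fin (l' + 1) → Fin d) :
    ∃ v ∈ Submodule.span ℂ
        {x : M | ∃ m : ℕ, 1 ≤ m ∧ m ≤ k' + l' ∧ ∃ L : Fin m → Fin d, x = symProd e L},
      (k' = 0 → l' = 0 → v = 0) ∧
      symProd e I * symProd e J - symProd e J * symProd e I
        = hbar • (∑ n : Fin (k' + 1), ∑ m : Fin (l' + 1), ∑ p : Fin d,
            c (I n) (J m) p •
              symProd e (Fin.append (Fin.append (n.removeNth I) (m.removeNth J))
                (fun _ : Fin 1 => p)))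
          + (hbar ^ 2) • v := by
  classical
  have hInil : List.ofFn I ≠ [] := by simp [List.ofFn_eq_nil_iff]
  have hJnil : List.ofFn J ≠ [] := by simp [List.ofFn_eq_nil_iff]
  obtain ⟨v₁, hv₁, heqI⟩ := prodE_symProd e hbar c hcomm (List.ofFn I)
  obtain ⟨v₂, hv₂, heqJ⟩ := prodE_symProd e hbar c hcomm (List.ofFn J)
  have hv₁' : v₁ ∈ Pspan e k' := by simpa using hv₁
  have hv₂' : v₂ ∈ Pspan e l' := by simpa using hv₂
  have hsymI : symProd e I = prodE e (List.ofFn I) - hbar • v₁ := by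
    rw [symProd_eq_symProdL e I, heqI, add_sub_cancel_right]
  have hsymJ : symProd e J = prodE e (List.ofFn J) - hbar • v₂ := by
    rw [symProd_eq_symProdL e J, heqJ, add_sub_cancel_right]
  obtain ⟨v₃, hv₃, heq₃⟩ := comm_prod e hbar c hcomm _ _ hInil hJnil
  have hv₃' : v₃ ∈ Pspan e (k' + l') := by
    refine Pspan_mono e ?_ hv₃
    simp
    omega
  have ha : prodE e (List.ofFn I) ∈ Pspan e (k' + 1) :=
    mem_Pspan e hInil (by simp)
  have hb : prodE e (List.ofFn J) ∈ Pspan e (l' + 1) :=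
    mem_Pspan e hJnil (by simp)
  obtain ⟨z₁, hz₁, hez₁⟩ := comm_span_span e hbar c hcomm ha hv₂'
  obtain ⟨z₂, hz₂, hez₂⟩ := comm_span_span e hbar c hcomm hv₁' hb
  obtain ⟨z₃, hz₃, hez₃⟩ := comm_span_span e hbar c hcomm hv₁' hv₂'
  have hz₁' : z₁ ∈ Pspan e (k' + l') := Pspan_mono e (by omega) hz₁
  have hz₂' : z₂ ∈ Pspan e (k' + l') := Pspan_mono e (by omega) hz₂
  have hz₃' : z₃ ∈ Pspan e (k' + l') := Pspan_mono e (by omega) hz₃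
  -- convert each leading-term word into a symmetrized product plus correction
  have hW : ∀ (n : Fin (k' + 1)) (m : Fin (l' + 1)) (p : Fin d),
      ∃ u ∈ Pspan e (k' + l'),
        prodE e (((List.ofFn I).eraseIdx ↑n ++ (List.ofFn J).eraseIdx ↑m) ++ [p])
          = symProd e (Fin.append (Fin.append (n.removeNth I) (m.removeNth J))
              (fun _ : Fin 1 => p)) + hbar • u := by
    intro n m p
    have hlist : ((List.ofFn I).eraseIdx ↑n ++ (List.ofFn J).eraseIdx ↑m) ++ [p]
        = List.ofFn (Fin.append (Fin.append (n.removeNth I) (m.removeNth J))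
            (fun _ : Fin 1 => p)) := by
      rw [List.ofFn_fin_append, List.ofFn_fin_append, ofFn_removeNth', ofFn_removeNth']
      simp [List.ofFn_succ]
    rw [hlist]
    obtain ⟨u, hu, hueq⟩ := prodE_symProd e hbar c hcomm
      (List.ofFn (Fin.append (Fin.append (n.removeNth I) (m.removeNth J))
        (fun _ : Fin 1 => p)))
    refine ⟨u, Pspan_mono e (by simp) hu, ?_⟩
    rw [hueq, symProd_eq_symProdL]
  choose u hu hueq using hW
  -- reindex the sums from list-length indices to Fin (k'+1) × Fin (l'+1)
  have hreidx : (∑ n : Fin ((List.ofFn I).length), ∑ m : Fin ((List.ofFn J).length), ∑ p,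
        c ((List.ofFn I).get n) ((List.ofFn J).get m) p •
          prodE e (((List.ofFn I).eraseIdx ↑n ++ (List.ofFn J).eraseIdx ↑m) ++ [p]))
      = ∑ n : Fin (k' + 1), ∑ m : Fin (l' + 1), ∑ p,
          c (I n) (J m) p •
            prodE e (((List.ofFn I).eraseIdx ↑n ++ (List.ofFn J).eraseIdx ↑m) ++ [p]) := by
    refine Fintype.sum_equiv (finCongr (List.length_ofFn (f := I))) _ _ fun n => ?_
    refine Fintype.sum_equiv (finCongr (List.length_ofFn (f := J))) _ _ fun m => ?_
    refine Finset.sum_congr rfl fun p _ => ?_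
    rw [List.get_ofFn, List.get_ofFn]
    simp only [finCongr_apply, Fin.coe_cast]
  -- main expansion of the leading sum
  have hmain : (∑ n : Fin (k' + 1), ∑ m : Fin (l' + 1), ∑ p,
        c (I n) (J m) p •
          prodE e (((List.ofFn I).eraseIdx ↑n ++ (List.ofFn J).eraseIdx ↑m) ++ [p]))
      = (∑ n : Fin (k' + 1), ∑ m : Fin (l' + 1), ∑ p,
          c (I n) (J m) p •
            symProd e (Fin.append (Fin.append (n.removeNth I) (m.removeNth J))
              (fun _ : Fin 1 => p)))
        + hbar • ∑ n : Fin (k' + 1), ∑ m : Fin (l' + 1), ∑ p,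
            c (I n) (J m) p • u n m p := by
    rw [Finset.smul_sum, ← Finset.sum_add_distrib]
    refine Finset.sum_congr rfl fun n _ => ?_
    rw [Finset.smul_sum, ← Finset.sum_add_distrib]
    refine Finset.sum_congr rfl fun m _ => ?_
    rw [Finset.smul_sum, ← Finset.sum_add_distrib]
    refine Finset.sum_congr rfl fun p _ => ?_
    rw [hueq n m p, smul_add, smul_comm]
  set T := ∑ n : Fin (k' + 1), ∑ m : Fin (l' + 1), ∑ p,
      c (I n) (J m) p •
        symProd e (Fin.append (Fin.append (n.removeNth I) (m.removeNth J))
          (fun _ : Fin 1 => p)) with hT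
  set W₁ := ∑ n : Fin (k' + 1), ∑ m : Fin (l' + 1), ∑ p, c (I n) (J m) p • u n m p with hW₁
  have hW₁mem : W₁ ∈ Pspan e (k' + l') :=
    sum_mem fun n _ => sum_mem fun m _ => sum_mem fun p _ => smul_mem _ _ (hu n m p)
  refine ⟨W₁ + v₃ - (z₁ + z₂) + hbar • z₃, ?_, ?_, ?_⟩
  · have : W₁ + v₃ - (z₁ + z₂) + hbar • z₃ ∈ Pspan e (k' + l') :=
      add_mem (sub_mem (add_mem hW₁mem hv₃') (add_mem hz₁' hz₂')) (smul_mem _ _ hz₃')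
    exact Pspan_le_Sspan e hbar c hcomm le_rfl this
  · rintro rfl rfl
    have : W₁ + v₃ - (z₁ + z₂) + hbar • z₃ ∈ Pspan e 0 :=
      add_mem (sub_mem (add_mem hW₁mem hv₃') (add_mem hz₁' hz₂')) (smul_mem _ _ hz₃')
    exact Pspan_zero e this
  · rw [hsymI, hsymJ]
    have expand : (prodE e (List.ofFn I) - hbar • v₁) * (prodE e (List.ofFn J) - hbar • v₂)
          - (prodE e (List.ofFn J) - hbar • v₂) * (prodE e (List.ofFn I) - hbar • v₁)
        = (prodE e (List.ofFn I) * prodE e (List.ofFn J)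
            - prodE e (List.ofFn J) * prodE e (List.ofFn I))
          - hbar • ((prodE e (List.ofFn I) * v₂ - v₂ * prodE e (List.ofFn I))
              + (v₁ * prodE e (List.ofFn J) - prodE e (List.ofFn J) * v₁))
          + (hbar * hbar) • (v₁ * v₂ - v₂ * v₁) := by
      simp only [mul_sub, sub_mul, smul_mul_assoc, mul_smul_comm, smul_smul, smul_sub,
        smul_add]
      abel
    rw [expand, heq₃, hreidx, hmain, hez₁, hez₂, hez₃]
    simp only [smul_add, smul_sub, smul_smul, pow_two]
    abel
end
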